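/- arXiv:2410.13913 — 8 statements merged into one kernel-verified Lean document; each statement's English description precedes it below -/
import Mathlib

section
/- For x = (x_1,...,x_n) ∈ ℝ^n and 1 ≤ k ≤ n-1, the normalized elementary symmetric means satisfy E_k(x)^2 ≥ E_{k-1}(x) E_{k+1}(x). -/
/-- The k-th elementary symmetric polynomial of `x : Fin n → ℝ`, with the
conventions `σ_0 = 1` and `σ_k = 0` for `k < 0` or `k > n`. -/
noncomputable def esymm (n : ℕ) (x : Fin n → ℝ) (k : ℤ) : ℝ :=
  if 0 ≤ k then ∑ s ∈ (Finset.univ : Finset (Fin n)).powersetCard k.toNat, ∏ i ∈ s, x i else 0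

/-- The normalized elementary symmetric mean `E_k(x) = σ_k(x) / C(n,k)`. -/
noncomputable def Esymm (n : ℕ) (x : Fin n → ℝ) (k : ℤ) : ℝ :=
  esymm n x k / (n.choose k.toNat)

/-!
Over `ℝ`, Rolle's theorem shows that the derivative of a real-rooted polynomial is real-rooted,
and the reversal `X ^ N * p (1 / X)` of a real-rooted `p` is real-rooted too. Starting from the
real-rooted `∏ (X + xᵢ)`, differentiate `n - k - 1` times, reverse, and differentiate `k - 1`
more times: what is left is the quadratic `(n! / 2) (E_{k-1} + 2 E_k X + E_{k+1} X ^ 2)`, and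
its discriminant is nonnegative.
-/

open Polynomial Nat

theorem div_choose_eq_factorial_mul_div_factorial {K : Type*} [Field K] [CharZero K] (a : K)
    {n t : ℕ} (ht : t ≤ n) : a / n.choose t = (n - t)! * t ! * a / n ! := by
  rw [Nat.cast_choose K ht]
  field_simp

namespace Polynomial

theorem Splits.derivative_real {p : ℝ[X]} (h : p.Splits) : (derivative p).Splits := by
  rw [splits_iff_card_roots] at h ⊢
  have := card_roots_le_derivative p
  have := card_roots' (derivative p)
  have := natDegree_derivative_le p
  omega

theorem Splits.iterate_derivative_real {p : ℝ[X]} (h : p.Splits) (m : ℕ) :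
    (derivative^[m] p).Splits := by
  induction m with
  | zero => exact h
  | succ m ih => rw [Function.iterate_succ_apply']; exact ih.derivative_real

theorem reflect_eq_reverse_mul_X_pow {R : Type*} [Semiring R] {p : R[X]} {N : ℕ}
    (h : p.natDegree ≤ N) : p.reflect N = p.reverse * X ^ (N - p.natDegree) := by
  conv_lhs => rw [← mul_one p, ← Nat.add_sub_cancel' h]
  rw [reflect_mul _ _ le_rfl (by simp), reflect_one, reverse]

section DivisionSemiring

variable {K : Type*} [DivisionSemiring K]

theorem Splits.reverse {p : K[X]} (h : p.Splits) : p.reverse.Splits := by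
  induction h using Submonoid.closure_induction with
  | mem f hf =>
    obtain ⟨a, rfl⟩ | ⟨a, rfl⟩ := hf
    · simp
    · exact Splits.of_natDegree_le_one ((reverse_natDegree_le _).trans (natDegree_X_add_C a).le)
  | one => rw [← C_1, reverse_C]; exact Splits.C 1
  | mul f g _ _ hf hg => rw [reverse_mul_of_domain]; exact hf.mul hg

theorem Splits.reflect {p : K[X]} (h : p.Splits) {N : ℕ} (hN : p.natDegree ≤ N) :
    (p.reflect N).Splits := by
  rw [reflect_eq_reverse_mul_X_pow hN]
  exact h.reverse.mul (Splits.X_pow _)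

end DivisionSemiring

theorem Splits.discrim_nonneg {K : Type*} [Field K] [LinearOrder K] [IsStrictOrderedRing K]
    {p : K[X]} (h : p.Splits) (hp : p.natDegree ≤ 2) :
    0 ≤ discrim (p.coeff 2) (p.coeff 1) (p.coeff 0) := by
  by_cases h2 : p.coeff 2 = 0
  · rw [h2, discrim, mul_zero, zero_mul, sub_zero]; positivity
  have hdeg : p.degree ≠ 0 := by
    rw [degree_eq_natDegree (by rintro rfl; simp at h2),
      natDegree_eq_of_le_of_coeff_ne_zero hp h2]
    decide
  obtain ⟨x, hx⟩ := h.exists_eval_eq_zero hdeg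
  rw [eval_eq_sum_range' (n := 3) (by omega)] at hx
  simp only [Finset.sum_range_succ, Finset.sum_range_zero] at hx
  rw [discrim_eq_sq_of_quadratic_eq_zero (x := x) (by linear_combination hx)]
  positivity

theorem factorial_mul_coeff_iterate_derivative {R : Type*} [Semiring R] (p : R[X]) (k i : ℕ) :
    (i ! : R) * (derivative^[k] p).coeff i = (i + k)! * p.coeff (i + k) := by
  rw [coeff_iterate_derivative, nsmul_eq_mul, ← mul_assoc, ← Nat.cast_mul,
    ← Nat.factorial_mul_descFactorial (Nat.le_add_left k i), Nat.add_sub_cancel]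

theorem Splits.factorial_mul_coeff_mul_le_sq {p : ℝ[X]} (h : p.Splits) {j k : ℕ}
    (hp : p.natDegree ≤ k + j + 2) :
    ((j + 2)! * k ! * p.coeff k) * (j ! * (k + 2)! * p.coeff (k + 2)) ≤
      ((j + 1)! * (k + 1)! * p.coeff (k + 1)) ^ 2 := by
  set D := derivative^[k] p
  set q := derivative^[j] (D.reflect (j + 2))
  have hD : D.natDegree ≤ j + 2 := (natDegree_iterate_derivative p k).trans (by omega)
  have hq : q.Splits := ((h.iterate_derivative_real k).reflect hD).iterate_derivative_real j
  have hqdeg : q.natDegree ≤ 2 := by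
    refine (natDegree_iterate_derivative _ j).trans ?_
    have := max_eq_left hD ▸ natDegree_reflect_le (N := j + 2) (p := D)
    omega
  -- `2 q = c_{k+2} + 2 c_{k+1} X + c_k X ^ 2`, where `c_t = (k + j + 2 - t)! t! p.coeff t`
  have hcoeff (i : ℕ) (hi : i ≤ 2) :
      (i ! * (2 - i)! : ℝ) * q.coeff i = (i + j)! * (2 - i + k)! * p.coeff (2 - i + k) := by
    rw [mul_comm (i ! : ℝ), mul_assoc, factorial_mul_coeff_iterate_derivative, coeff_reflect,
      revAt_le (by omega), show j + 2 - (i + j) = 2 - i by omega, mul_left_comm,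
      factorial_mul_coeff_iterate_derivative, mul_assoc]
  have hq0 := hcoeff 0 (by norm_num)
  have hq1 := hcoeff 1 (by norm_num)
  have hq2 := hcoeff 2 le_rfl
  norm_num [add_comm] at hq0 hq1 hq2
  have hdiscrim := hq.discrim_nonneg hqdeg
  rw [discrim] at hdiscrim
  rw [← hq0, ← hq1, ← hq2]
  linarith

theorem Splits.coeff_div_choose_mul_le_sq {p : ℝ[X]} (h : p.Splits) {n k : ℕ}
    (hp : p.natDegree ≤ n) (hk : k + 2 ≤ n) :
    p.coeff k / n.choose k * (p.coeff (k + 2) / n.choose (k + 2)) ≤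
      (p.coeff (k + 1) / n.choose (k + 1)) ^ 2 := by
  obtain ⟨j, rfl⟩ : ∃ j, n = k + j + 2 := ⟨n - k - 2, by omega⟩
  rw [div_choose_eq_factorial_mul_div_factorial (p.coeff k) (by omega),
    div_choose_eq_factorial_mul_div_factorial (p.coeff (k + 1)) (by omega),
    div_choose_eq_factorial_mul_div_factorial (p.coeff (k + 2)) hk,
    show k + j + 2 - k = j + 2 by omega, show k + j + 2 - (k + 1) = j + 1 by omega,
    show k + j + 2 - (k + 2) = j by omega, div_mul_div_comm (α := ℝ), div_pow, ← sq]
  gcongr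
  exact h.factorial_mul_coeff_mul_le_sq hp

end Polynomial

theorem Esymm_natCast_eq_coeff_prod_X_add_C {n t : ℕ} (x : Fin n → ℝ) (ht : t ≤ n) :
    Esymm n x t = (∏ i, (X + C (x i))).coeff (n - t) / n.choose (n - t) := by
  rw [Esymm, esymm, if_pos (Int.natCast_nonneg t), Int.toNat_natCast,
    Finset.prod_X_add_C_coeff _ _ (by simp), Finset.card_univ, Fintype.card_fin,
    Nat.sub_sub_self ht, Nat.choose_symm ht]

theorem newton_inequality (n k : ℕ) (x : Fin n → ℝ) (hk1 : 1 ≤ k) (hk2 : k ≤ n - 1) :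
    Esymm n x k ^ 2 ≥ Esymm n x ((k : ℤ) - 1) * Esymm n x ((k : ℤ) + 1) := by
  obtain ⟨i, rfl⟩ : ∃ i, n = i + k + 1 := ⟨n - k - 1, by omega⟩
  set p : ℝ[X] := ∏ j, (X + C (x j))
  have hp : p.Splits := Splits.prod fun j _ => Splits.X_add_C (x j)
  have hpdeg : p.natDegree ≤ i + k + 1 := (natDegree_prod_le _ _).trans (by simp)
  rw [show (k : ℤ) - 1 = ((k - 1 : ℕ) : ℤ) by omega,
    show (k : ℤ) + 1 = ((k + 1 : ℕ) : ℤ) by omega,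
    Esymm_natCast_eq_coeff_prod_X_add_C x (by omega),
    Esymm_natCast_eq_coeff_prod_X_add_C x (by omega),
    Esymm_natCast_eq_coeff_prod_X_add_C x (by omega),
    show i + k + 1 - (k - 1) = i + 2 by omega, show i + k + 1 - k = i + 1 by omega,
    show i + k + 1 - (k + 1) = i by omega, mul_comm]
  exact Splits.coeff_div_choose_mul_le_sq hp hpdeg (by omega)
end

section
/- For x ∈ ℝ^n lying in the Gårding cone Γ_k = {x : σ_m(x) > 0 for all m = 1,...,k}, the Maclaurin chain of inequalities holds: E_1(x) ≥ E_2(x)^{1/2} ≥ ⋯ ≥ E_k(x)^{1/k}. -/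
open Polynomial Finset

noncomputable def sig (n : ℕ) (x : Fin n → ℝ) (j : ℕ) : ℝ :=
  ∑ s ∈ (Finset.univ : Finset (Fin n)).powersetCard j, ∏ i ∈ s, x i

lemma deriv_step (N : ℕ) (s : Multiset ℝ) (hs : Multiset.card s = N + 1) :
    ∃ t : Multiset ℝ, Multiset.card t = N ∧
      ∀ j ≤ N, ((N + 1 - j : ℕ) : ℝ) * s.esymm j = ((N + 1 : ℕ) : ℝ) * t.esymm j := by
  set P : ℝ[X] := (s.map fun a => X - C a).prod with hPdef
  have hPdeg : P.natDegree = N + 1 := by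
    rw [hPdef, natDegree_multiset_prod_X_sub_C_eq_card, hs]
  have hProots : P.roots = s := roots_multiset_prod_X_sub_C s
  have hm : P.Monic := monic_multiset_prod_of_monic _ _ fun a _ => monic_X_sub_C a
  set D := derivative P with hDdef
  have hcoeffN : D.coeff N = ((N + 1 : ℕ) : ℝ) := by
    have h := coeff_derivative P N
    rw [← hDdef] at h
    have h2 : P.coeff (N + 1) = 1 := by rw [← hPdeg]; exact hm.coeff_natDegree
    rw [h, h2, one_mul]; push_cast; ring
  have hDdeg : D.natDegree = N := by
    have h1 : D.natDegree ≤ N := by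
      have h := natDegree_derivative_le P
      rw [← hDdef] at h
      omega
    have h2 : N ≤ D.natDegree := le_natDegree_of_ne_zero (by rw [hcoeffN]; positivity)
    omega
  have hcard : Multiset.card D.roots = N := by
    have h1 := P.card_roots_le_derivative
    rw [hProots, hs, ← hDdef] at h1
    have h2 : Multiset.card D.roots ≤ D.natDegree := D.card_roots'
    omega
  have hsplit : D = C D.leadingCoeff * (D.roots.map fun a => X - C a).prod :=
    (C_leadingCoeff_mul_prod_multiset_X_sub_C (by rw [hcard, hDdeg])).symm
  have hlead : D.leadingCoeff = ((N + 1 : ℕ) : ℝ) := by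
    rw [leadingCoeff, hDdeg, hcoeffN]
  refine ⟨D.roots, hcard, fun j hj => ?_⟩
  have e1 : D.coeff (N - j) = ((N - j : ℕ) + 1 : ℝ) * P.coeff (N - j + 1) := by
    rw [hDdef, coeff_derivative]; push_cast; ring
  have e2 : P.coeff (N - j + 1) = (-1) ^ j * s.esymm j := by
    have h' : N - j + 1 ≤ Multiset.card s := by omega
    rw [hPdef, Multiset.prod_X_sub_C_coeff s h', hs]
    have hh : N + 1 - (N - j + 1) = j := by omega
    rw [hh]
  have e3 : D.coeff (N - j) = ((N + 1 : ℕ) : ℝ) * ((-1) ^ j * (D.roots).esymm j) := by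
    have h' : N - j ≤ Multiset.card D.roots := by omega
    conv_lhs => rw [hsplit]
    rw [coeff_C_mul, hlead, Multiset.prod_X_sub_C_coeff D.roots h', hcard]
    have hh : N - (N - j) = j := by omega
    rw [hh]
  have e4 : ((N - j : ℕ) + 1 : ℝ) * ((-1)^j * s.esymm j)
      = ((N + 1 : ℕ) : ℝ) * ((-1) ^ j * (D.roots).esymm j) := by
    rw [← e2, ← e1, e3]
  have hcast : ((N + 1 - j : ℕ) : ℝ) = ((N - j : ℕ) + 1 : ℝ) := by
    have h1 : N + 1 - j = (N - j) + 1 := by omega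
    rw [h1]; push_cast; ring
  rw [hcast]
  have hne : ((-1 : ℝ)) ^ j ≠ 0 := by positivity
  apply mul_left_cancel₀ hne
  linear_combination e4


lemma sig_eq_esymm (n : ℕ) (x : Fin n → ℝ) (j : ℕ) :
    sig n x j = (Finset.univ.val.map x).esymm j := by
  rw [Finset.esymm_map_val]; rfl

lemma exists_fn (N : ℕ) (s : Multiset ℝ) (hs : Multiset.card s = N) :
    ∃ x : Fin N → ℝ, Multiset.map x Finset.univ.val = s := by
  obtain ⟨l, rfl⟩ : ∃ l : List ℝ, (l : Multiset ℝ) = s := ⟨s.toList, Multiset.coe_toList s⟩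
  simp only [Multiset.coe_card] at hs
  subst hs
  exact ⟨l.get, by rw [Fin.univ_val_map, List.ofFn_get]⟩

lemma sig_zero (n : ℕ) (x : Fin n → ℝ) : sig n x 0 = 1 := by simp [sig]

lemma sig_one (n : ℕ) (x : Fin n → ℝ) : sig n x 1 = ∑ i, x i := by
  simp [sig, Finset.powersetCard_one, Finset.sum_map]

lemma sig_top (n : ℕ) (x : Fin n → ℝ) : sig n x n = ∏ i, x i := by
  have h : (Finset.univ : Finset (Fin n)).powersetCard n = {Finset.univ} := by
    simpa using Finset.powersetCard_self (Finset.univ : Finset (Fin n))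
  simp [sig, h]

lemma sq_sum_eq' {ι : Type*} [DecidableEq ι] (s : Finset ι) (f : ι → ℝ) :
    (∑ i ∈ s, f i) ^ 2 = (∑ i ∈ s, f i ^ 2) + 2 * ∑ t ∈ s.powersetCard 2, ∏ i ∈ t, f i := by
  induction s using Finset.induction with
  | empty =>
    rw [show (∅:Finset ι).powersetCard 2 = ∅ from Finset.powersetCard_eq_empty.mpr (by simp)]
    simp
  | @insert a s ha ih =>
    rw [Finset.sum_insert ha, Finset.sum_insert ha, Finset.powersetCard_succ_insert ha,
        Finset.sum_union, Finset.sum_image]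
    · have h1 : ∑ t ∈ s.powersetCard 1, ∏ i ∈ insert a t, f i
          = f a * ∑ i ∈ s, f i := by
        rw [Finset.powersetCard_one, Finset.sum_map, Finset.mul_sum]
        apply Finset.sum_congr rfl
        intro b hb
        rw [show ((⟨_, Finset.singleton_injective⟩ : ι ↪ Finset ι) b) = {b} from rfl,
          Finset.prod_insert (by simp; rintro rfl; exact ha hb), Finset.prod_singleton]
      rw [h1]
      linear_combination ih
    · intro t ht u hu h
      have hta : a ∉ t := fun h' => ha ((Finset.mem_powersetCard.mp ht).1 h')
      have hua : a ∉ u := fun h' => ha ((Finset.mem_powersetCard.mp hu).1 h')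
      have := congrArg (Finset.erase · a) h
      simpa [Finset.erase_insert, hta, hua] using this
    · rw [Finset.disjoint_left]
      intro t ht ht'
      obtain ⟨u, hu, rfl⟩ := Finset.mem_image.mp ht'
      exact ha ((Finset.mem_powersetCard.mp ht).1 (Finset.mem_insert_self a u))


lemma sig_compl (n j : ℕ) (hj : j ≤ n) (x : Fin n → ℝ) (hx : ∀ i, x i ≠ 0) :
    sig n x j = (∏ i, x i) * sig n (fun i => (x i)⁻¹) (n - j) := by
  rw [sig, sig, Finset.mul_sum]
  apply Finset.sum_nbij' (fun t => tᶜ) (fun t => tᶜ)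
  · intro t ht
    rw [Finset.mem_powersetCard_univ] at ht ⊢
    rw [Finset.card_compl, ht, Fintype.card_fin]
  · intro t ht
    rw [Finset.mem_powersetCard_univ] at ht ⊢
    rw [Finset.card_compl, ht, Fintype.card_fin]
    omega
  · intro t _; exact compl_compl t
  · intro t _; exact compl_compl t
  · intro t ht
    have h1 : ∏ i ∈ tᶜ, x i ≠ 0 := Finset.prod_ne_zero_iff.mpr fun i _ => hx i
    have h2 : ∏ i ∈ tᶜ, (x i)⁻¹ = (∏ i ∈ tᶜ, x i)⁻¹ := by
      rw [Finset.prod_inv_distrib]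
    rw [h2, ← Finset.prod_mul_prod_compl t x]
    field_simp

/-- E₂ ≤ E₁² in unnormalized form. -/
lemma e2_le_e1sq (n : ℕ) (y : Fin n → ℝ) :
    (n : ℝ)^2 * (2 * sig n y 2) ≤ (n : ℝ) * ((n : ℝ) - 1) * (sig n y 1)^2 := by
  have hcs : (∑ i, y i)^2 ≤ (n : ℝ) * ∑ i, (y i)^2 := by
    have := sq_sum_le_card_mul_sum_sq (s := (Finset.univ : Finset (Fin n))) (f := y)
    simpa using this
  have hid : (sig n y 1)^2 = (∑ i, (y i)^2) + 2 * sig n y 2 := by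
    rw [sig_one]
    have := sq_sum_eq' (Finset.univ : Finset (Fin n)) y
    simpa [sig] using this
  rw [sig_one] at *
  nlinarith [sq_nonneg (∑ i, y i), hcs, hid]

lemma newton_base (m : ℕ) (x : Fin (m+2) → ℝ) :
    sig (m+2) x m / ((m+2).choose m) * (sig (m+2) x (m+2) / ((m+2).choose (m+2)))
      ≤ (sig (m+2) x (m+1) / ((m+2).choose (m+1))) ^ 2 := by
  by_cases hx : ∀ i, x i ≠ 0
  · set y : Fin (m+2) → ℝ := fun i => (x i)⁻¹ with hy
    set P : ℝ := ∏ i, x i with hP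
    have c0 : sig (m+2) x (m+2) = P * sig (m+2) y 0 := by
      have := sig_compl (m+2) (m+2) le_rfl x hx
      simpa using this
    have c1 : sig (m+2) x (m+1) = P * sig (m+2) y 1 := by
      have := sig_compl (m+2) (m+1) (by omega) x hx
      have h : m + 2 - (m+1) = 1 := by omega
      rwa [h] at this
    have c2 : sig (m+2) x m = P * sig (m+2) y 2 := by
      have := sig_compl (m+2) m (by omega) x hx
      have h : m + 2 - m = 2 := by omega
      rwa [h] at this
    have hch : ((m+2).choose m : ℝ) = ((m+2).choose 2 : ℝ) := by
      norm_cast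
      have := Nat.choose_symm (show 2 ≤ m + 2 by omega) (n := m + 2)
      simpa using this
    have hch2 : ((m+2).choose 2 : ℝ) * 2 = (m+2 : ℝ) * (m+1 : ℝ) := by
      have h2 : (m+2).choose 2 * 2 = (m+2) * (m+1) := by
        have := (Nat.add_one_mul_choose_eq (m+1) 1).symm
        rw [Nat.choose_one_right] at this
        simpa [Nat.succ_eq_add_one, mul_comm] using this
      exact_mod_cast congrArg (Nat.cast : ℕ → ℝ) h2
    have hch1 : ((m+2).choose (m+1) : ℝ) = (m+2 : ℝ) := by
      norm_cast
      exact Nat.choose_succ_self_right (m+1)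
    have hchm2 : ((m+2).choose (m+2) : ℝ) = 1 := by norm_cast; exact Nat.choose_self _
    rw [c0, c1, c2, hch, hch1, hchm2, sig_zero]
    have key := e2_le_e1sq (m+2) y
    have hchpos : (0:ℝ) < ((m+2).choose 2 : ℝ) :=
      Nat.cast_pos.mpr (Nat.choose_pos (by omega))
    have hP2 : (0:ℝ) ≤ P^2 := sq_nonneg P
    rw [mul_one, div_one, div_mul_eq_mul_div, div_pow,
      div_le_div_iff₀ hchpos (by positivity)]
    push_cast at key ⊢
    nlinarith [mul_le_mul_of_nonneg_left key hP2, hch2]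
  · push_neg at hx
    obtain ⟨i0, hi0⟩ := hx
    have : sig (m+2) x (m+2) = 0 := by
      rw [sig_top]; exact Finset.prod_eq_zero (Finset.mem_univ i0) hi0
    rw [this]
    have : (0:ℝ) ≤ (sig (m+2) x (m+1) / ((m+2).choose (m+1))) ^ 2 := sq_nonneg _
    simpa using this

lemma newton : ∀ (n : ℕ) (x : Fin n → ℝ) (j : ℕ), j + 2 ≤ n →
    sig n x j / (n.choose j) * (sig n x (j+2) / (n.choose (j+2)))
      ≤ (sig n x (j+1) / (n.choose (j+1))) ^ 2 := by
  intro n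
  induction n with
  | zero => intro x j h; omega
  | succ N ih =>
    intro x j h
    rcases eq_or_lt_of_le h with heq | hlt
    · -- N + 1 = j + 2
      obtain rfl : N = j + 1 := by omega
      exact newton_base j x
    · -- j + 2 ≤ N
      have hj2 : j + 2 ≤ N := by omega
      set s : Multiset ℝ := Finset.univ.val.map x with hsdef
      have hscard : Multiset.card s = N + 1 := by simp [hsdef]
      obtain ⟨t, htcard, hrel⟩ := deriv_step N s hscard
      obtain ⟨y, hy⟩ := exists_fn N t htcard
      have key : ∀ j' ≤ N, sig (N+1) x j' / ((N+1).choose j') = sig N y j' / (N.choose j') := by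
        intro j' hj'
        have h1 : ((N + 1 - j' : ℕ) : ℝ) * sig (N+1) x j' = ((N + 1 : ℕ) : ℝ) * sig N y j' := by
          rw [sig_eq_esymm, sig_eq_esymm, hy, ← hsdef]
          exact hrel j' hj'
        have h2 : (N.choose j') * (N + 1) = ((N+1).choose j') * (N + 1 - j') :=
          Nat.choose_mul_succ_eq N j'
        have hc1 : (0:ℝ) < ((N+1).choose j' : ℝ) :=
          Nat.cast_pos.mpr (Nat.choose_pos (by omega))
        have hc2 : (0:ℝ) < (N.choose j' : ℝ) :=
          Nat.cast_pos.mpr (Nat.choose_pos hj')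
        have h2' : ((N.choose j' : ℕ) : ℝ) * ((N + 1 : ℕ) : ℝ)
            = (((N+1).choose j' : ℕ) : ℝ) * ((N + 1 - j' : ℕ) : ℝ) := by exact_mod_cast congrArg (Nat.cast : ℕ → ℝ) h2
        rw [div_eq_div_iff (ne_of_gt hc1) (ne_of_gt hc2)]
        have hN1 : (0:ℝ) < ((N + 1 : ℕ) : ℝ) := by positivity
        apply mul_left_cancel₀ (ne_of_gt hN1)
        calc ((N + 1 : ℕ) : ℝ) * (sig (N+1) x j' * (N.choose j' : ℝ))
            = (((N + 1 - j' : ℕ) : ℝ) * sig (N+1) x j') * ((N+1).choose j' : ℝ)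
              + sig (N+1) x j' * (((N.choose j' : ℕ) : ℝ) * ((N + 1 : ℕ) : ℝ)
                - (((N+1).choose j' : ℕ) : ℝ) * ((N + 1 - j' : ℕ) : ℝ)) := by ring
          _ = ((N + 1 : ℕ) : ℝ) * (sig N y j' * ((N+1).choose j' : ℝ)) := by
              rw [h1, h2']; ring
      rw [key j (by omega), key (j+1) (by omega), key (j+2) (by omega)]
      exact ih y j hj2

lemma esymm_natCast (n m : ℕ) (x : Fin n → ℝ) : esymm n x (m : ℤ) = sig n x m := by
  simp [esymm, sig]

lemma Esymm_natCast (n m : ℕ) (x : Fin n → ℝ) :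
    Esymm n x (m : ℤ) = sig n x m / (n.choose m) := by
  simp [Esymm, esymm, sig]

theorem maclaurin_inequality (n k : ℕ) (x : Fin n → ℝ)
    (hx : ∀ m : ℕ, 1 ≤ m → m ≤ k → 0 < esymm n x m) :
    ∀ i : ℕ, 1 ≤ i → i < k →
      Esymm n x ((i : ℤ) + 1) ^ ((1 : ℝ) / (i + 1)) ≤ Esymm n x i ^ ((1 : ℝ) / i) := by
  intro i hi1 hik
  -- k ≤ n
  have hkn : k ≤ n := by
    by_contra hkn
    push_neg at hkn
    have h0 := hx (n+1) (by omega) (by omega)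
    rw [esymm_natCast] at h0
    have : sig n x (n+1) = 0 := by
      rw [sig, Finset.powersetCard_eq_empty.mpr (by simp), Finset.sum_empty]
    rw [this] at h0
    exact lt_irrefl 0 h0
  set E : ℕ → ℝ := fun m => sig n x m / (n.choose m) with hE
  have Epos : ∀ m, 1 ≤ m → m ≤ k → 0 < E m := by
    intro m h1 h2
    have := hx m h1 h2
    rw [esymm_natCast] at this
    exact div_pos this (Nat.cast_pos.mpr (Nat.choose_pos (by omega)))
  have E0 : E 0 = 1 := by simp [hE, sig_zero]
  -- the chain E_{i+1}^i ≤ E_i^{i+1}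
  have chain : ∀ i, 1 ≤ i → i < k → E (i+1) ^ i ≤ E i ^ (i+1) := by
    intro i
    induction i with
    | zero => omega
    | succ p ihp =>
      intro _ hik
      rcases Nat.eq_zero_or_pos p with rfl | hp
      · -- E 2 ^ 1 ≤ E 1 ^ 2
        have h := newton n x 0 (by omega)
        rw [show (0+1) = 1 from rfl, show (0+2) = 2 from rfl] at h
        have hE0 : sig n x 0 / (n.choose 0) = 1 := by simp [sig_zero]
        rw [hE0, one_mul] at h
        simpa [hE] using h
      · have ih := ihp hp (by omega)
        have A := newton n x p (by omega)
        have ha : 0 < E p := Epos p hp (by omega)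
        have hb : 0 < E (p+1) := Epos (p+1) (by omega) (by omega)
        have hc : 0 < E (p+2) := Epos (p+2) (by omega) (by omega)
        have A' : E p * E (p+2) ≤ E (p+1) ^ 2 := A
        have hcb : E (p+2) ≤ E (p+1)^2 / E p := by
          rw [le_div_iff₀ ha]; linarith
        calc E (p+2) ^ (p+1) ≤ (E (p+1)^2 / E p) ^ (p+1) :=
              pow_le_pow_left₀ hc.le hcb _
          _ = E (p+1) ^ (2*(p+1)) / E p ^ (p+1) := by rw [div_pow, ← pow_mul]
          _ ≤ E (p+1) ^ (2*(p+1)) / E (p+1) ^ p := by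
              have hih : E (p+1) ^ p ≤ E p ^ (p+1) := ih
              gcongr
          _ = E (p+1) ^ (p+2) := by
              rw [show 2*(p+1) = (p+2)+p by ring, pow_add, mul_div_assoc,
                div_self (by positivity), mul_one]
  have key := chain i hi1 hik
  have ha : 0 < E i := Epos i hi1 (by omega)
  have hb : 0 < E (i+1) := Epos (i+1) (by omega) (by omega)
  have hgoal : Esymm n x ((i : ℤ) + 1) = E (i+1) := by
    rw [show ((i : ℤ) + 1) = ((i+1 : ℕ) : ℤ) by push_cast; ring, Esymm_natCast]
  have hgoal2 : Esymm n x (i : ℤ) = E i := Esymm_natCast n i x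
  rw [hgoal, hgoal2]
  -- rpow manipulation
  set a := E i
  set b := E (i+1)
  have hiR : ((i:ℝ)) ≠ 0 := Nat.cast_ne_zero.mpr (by omega)
  have hCne : i*(i+1) ≠ 0 := by positivity
  have e1 : (b ^ ((1:ℝ)/((i:ℝ)+1))) ^ (i*(i+1)) = b ^ i := by
    rw [← Real.rpow_natCast (b ^ ((1:ℝ)/((i:ℝ)+1))) (i*(i+1)), ← Real.rpow_mul hb.le,
      show (1:ℝ)/((i:ℝ)+1) * ((i*(i+1) : ℕ) : ℝ) = ((i:ℕ):ℝ) by push_cast; field_simp,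
      Real.rpow_natCast]
  have e2 : (a ^ ((1:ℝ)/(i:ℝ))) ^ (i*(i+1)) = a ^ (i+1) := by
    rw [← Real.rpow_natCast (a ^ ((1:ℝ)/(i:ℝ))) (i*(i+1)), ← Real.rpow_mul ha.le,
      show (1:ℝ)/((i:ℝ)) * ((i*(i+1) : ℕ) : ℝ) = (((i+1):ℕ):ℝ) by push_cast; field_simp,
      Real.rpow_natCast]
  have hpow : (b ^ ((1:ℝ)/((i:ℝ)+1))) ^ (i*(i+1)) ≤ (a ^ ((1:ℝ)/(i:ℝ))) ^ (i*(i+1)) := by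
    rw [e1, e2]; exact key
  have := le_of_pow_le_pow_left₀ hCne (Real.rpow_pos_of_pos ha _).le hpow
  convert this using 2 <;> push_cast <;> ring
end

section
/- For any real α, β and any z = (z_1,z_2,z_3,z_4) ∈ ℝ^4, define S_k(z) = E_k(z) + (α+β)E_{k-1}(z) + αβ E_{k-2}(z). Then the identity holds: 576[S_3(z)^2 − S_2(z)S_4(z)] = 3∑_{(i,j)} [(z_i − z_j)(z_p + α)(z_q + β) + (z_i − z_j)(z_q + α)(z_p + β)]^2 + 2{[(z_1−z_2)(z_3−z_4)(α−β)]^2 + [(z_1−z_3)(z_2−z_4)(α−β)]^2 + [(z_1−z_4)(z_2−z_3)(α−β)]^2}, where the first sum runs over the six pairs {i,j} ⊂ {1,2,3,4} with {p,q} the complementary pair; in particular S_3(z)^2 ≥ S_2(z)S_4(z). -/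
/-- `S_k(x) = E_k(x) + (α+β) E_{k-1}(x) + αβ E_{k-2}(x)`. -/
noncomputable def S (n : ℕ) (α β : ℝ) (x : Fin n → ℝ) (k : ℤ) : ℝ :=
  Esymm n x k + (α + β) * Esymm n x (k - 1) + α * β * Esymm n x (k - 2)

namespace Multiset

variable {R : Type*} [CommSemiring R]

theorem esymm_zero_right (s : Multiset R) : s.esymm 0 = 1 := by
  simp [esymm, powersetCard_zero_left]

theorem esymm_zero_succ (k : ℕ) : (0 : Multiset R).esymm (k + 1) = 0 := by
  simp [esymm, powersetCard_zero_right]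

theorem esymm_cons_succ (a : R) (s : Multiset R) (k : ℕ) :
    (a ::ₘ s).esymm (k + 1) = s.esymm (k + 1) + a * s.esymm k := by
  simp [esymm, powersetCard_cons, sum_map_mul_left]

end Multiset

theorem Fin.univ_val_map_four {α : Type*} (f : Fin 4 → α) :
    Finset.univ.val.map f = f 0 ::ₘ f 1 ::ₘ f 2 ::ₘ f 3 ::ₘ 0 := by
  rw [Fin.univ_val_map]
  rfl

theorem Esymm_eq_multiset_esymm (n : ℕ) (x : Fin n → ℝ) {k : ℤ} (hk : 0 ≤ k) :
    Esymm n x k = (Finset.univ.val.map x).esymm k.toNat / n.choose k.toNat := by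
  rw [Esymm, esymm, if_pos hk, Finset.esymm_map_val]

section FourVariables

variable (α β : ℝ) (z : Fin 4 → ℝ)

theorem S_four_eq :
    S 4 α β z 2 = (z 0 * z 1 + z 0 * z 2 + z 0 * z 3 + z 1 * z 2 + z 1 * z 3 + z 2 * z 3) / 6
        + (α + β) * (z 0 + z 1 + z 2 + z 3) / 4 + α * β ∧
    S 4 α β z 3 = (z 0 * z 1 * z 2 + z 0 * z 1 * z 3 + z 0 * z 2 * z 3 + z 1 * z 2 * z 3) / 4
        + (α + β) * (z 0 * z 1 + z 0 * z 2 + z 0 * z 3 + z 1 * z 2 + z 1 * z 3 + z 2 * z 3) / 6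
        + α * β * (z 0 + z 1 + z 2 + z 3) / 4 ∧
    S 4 α β z 4 = z 0 * z 1 * z 2 * z 3
        + (α + β) * (z 0 * z 1 * z 2 + z 0 * z 1 * z 3 + z 0 * z 2 * z 3 + z 1 * z 2 * z 3) / 4
        + α * β * (z 0 * z 1 + z 0 * z 2 + z 0 * z 3 + z 1 * z 2 + z 1 * z 3 + z 2 * z 3) / 6 := by
  refine ⟨?_, ?_, ?_⟩ <;>
  · simp (disch := norm_num) only [S, Int.reduceSub, Esymm_eq_multiset_esymm, Int.reduceToNat,
      Fin.univ_val_map_four, Multiset.esymm_cons_succ, Multiset.esymm_zero_right,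
      Multiset.esymm_zero_succ]
    norm_num [Nat.choose]
    ring

theorem S_four_sq_sub_mul_eq_sum_sq :
    576 * (S 4 α β z 3 ^ 2 - S 4 α β z 2 * S 4 α β z 4) =
      3 * (((z 0 - z 1) * (z 2 + α) * (z 3 + β) + (z 0 - z 1) * (z 3 + α) * (z 2 + β)) ^ 2
        + ((z 0 - z 2) * (z 1 + α) * (z 3 + β) + (z 0 - z 2) * (z 3 + α) * (z 1 + β)) ^ 2
        + ((z 0 - z 3) * (z 1 + α) * (z 2 + β) + (z 0 - z 3) * (z 2 + α) * (z 1 + β)) ^ 2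
        + ((z 1 - z 2) * (z 0 + α) * (z 3 + β) + (z 1 - z 2) * (z 3 + α) * (z 0 + β)) ^ 2
        + ((z 1 - z 3) * (z 0 + α) * (z 2 + β) + (z 1 - z 3) * (z 2 + α) * (z 0 + β)) ^ 2
        + ((z 2 - z 3) * (z 0 + α) * (z 1 + β) + (z 2 - z 3) * (z 1 + α) * (z 0 + β)) ^ 2)
      + 2 * (((z 0 - z 1) * (z 2 - z 3) * (α - β)) ^ 2
        + ((z 0 - z 2) * (z 1 - z 3) * (α - β)) ^ 2
        + ((z 0 - z 3) * (z 1 - z 2) * (α - β)) ^ 2) := by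
  obtain ⟨hS₂, hS₃, hS₄⟩ := S_four_eq α β z
  rw [hS₂, hS₃, hS₄]
  ring

end FourVariables

theorem S_newton_dim4_identity (α β : ℝ) (z : Fin 4 → ℝ) :
    576 * (S 4 α β z 3 ^ 2 - S 4 α β z 2 * S 4 α β z 4) =
      3 * (((z 0 - z 1) * (z 2 + α) * (z 3 + β) + (z 0 - z 1) * (z 3 + α) * (z 2 + β)) ^ 2
        + ((z 0 - z 2) * (z 1 + α) * (z 3 + β) + (z 0 - z 2) * (z 3 + α) * (z 1 + β)) ^ 2
        + ((z 0 - z 3) * (z 1 + α) * (z 2 + β) + (z 0 - z 3) * (z 2 + α) * (z 1 + β)) ^ 2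
        + ((z 1 - z 2) * (z 0 + α) * (z 3 + β) + (z 1 - z 2) * (z 3 + α) * (z 0 + β)) ^ 2
        + ((z 1 - z 3) * (z 0 + α) * (z 2 + β) + (z 1 - z 3) * (z 2 + α) * (z 0 + β)) ^ 2
        + ((z 2 - z 3) * (z 0 + α) * (z 1 + β) + (z 2 - z 3) * (z 1 + α) * (z 0 + β)) ^ 2)
      + 2 * (((z 0 - z 1) * (z 2 - z 3) * (α - β)) ^ 2
        + ((z 0 - z 2) * (z 1 - z 3) * (α - β)) ^ 2
        + ((z 0 - z 3) * (z 1 - z 2) * (α - β)) ^ 2) ∧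
    S 4 α β z 3 ^ 2 ≥ S 4 α β z 2 * S 4 α β z 4 := by
  refine ⟨S_four_sq_sub_mul_eq_sum_sq α β z, ?_⟩
  have gap_nonneg : 0 ≤ 576 * (S 4 α β z 3 ^ 2 - S 4 α β z 2 * S 4 α β z 4) :=
    S_four_sq_sub_mul_eq_sum_sq α β z ▸ by positivity
  linarith
end

section
/- Let α, β ≥ 0 and x ∈ ℝ^n with E_1(x) ≥ 0 and E_2(x) ≥ 0. Then S_1(x)^2 − S_0(x)S_2(x) = E_1(x)^2 − E_2(x) + (α+β)E_1(x) + (α+β)^2 − αβ ≥ 0, where S_k(x) = E_k(x) + (α+β)E_{k-1}(x) + αβE_{k-2}(x). -/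
open Finset

open MvPolynomial in
theorem two_mul_sum_prod_powersetCard_two {σ R : Type*} [Fintype σ] [CommRing R] (f : σ → R) :
    2 * ∑ t ∈ (univ : Finset σ).powersetCard 2, ∏ i ∈ t, f i = (∑ i, f i) ^ 2 - ∑ i, f i ^ 2 := by
  have hfilter : {a ∈ antidiagonal 2 | a.1 < 2} = {(0, 2), (1, 1)} := by decide
  have h := congrArg (eval f) (MvPolynomial.mul_esymm_eq_sum σ R 2)
  rw [hfilter, sum_pair (by decide), MvPolynomial.esymm_zero, MvPolynomial.esymm_one] at h
  simp only [MvPolynomial.esymm, psum, map_mul, map_add, map_sum, map_prod, map_pow, map_neg,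
    map_one, map_ofNat, eval_X, pow_one, Nat.cast_ofNat] at h
  linear_combination h

section Esymm

variable (n : ℕ) (x : Fin n → ℝ)

lemma Esymm_zero : Esymm n x 0 = 1 := by
  simp [Esymm, esymm]

lemma Esymm_of_neg {k : ℤ} (hk : k < 0) : Esymm n x k = 0 := by
  simp [Esymm, esymm, hk.not_ge]

lemma Esymm_one : Esymm n x 1 = (∑ i, x i) / n := by
  simp [Esymm, esymm, powersetCard_one]

/-- Also valid for `n ≤ 1`, where both sides are `0` because `C(n, 2) = 0` and `x / 0 = 0`. -/
lemma Esymm_two : Esymm n x 2 = ((∑ i, x i) ^ 2 - ∑ i, x i ^ 2) / (n * (n - 1)) := by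
  rw [← two_mul_sum_prod_powersetCard_two, Esymm, esymm, if_pos zero_le_two,
    show (2 : ℤ).toNat = 2 from rfl, Nat.cast_choose_two, div_div_eq_mul_div, mul_comm]

lemma Esymm_two_le_Esymm_one_sq : Esymm n x 2 ≤ Esymm n x 1 ^ 2 := by
  rw [Esymm_one, Esymm_two]
  obtain hn | hn := le_or_gt n 1
  · interval_cases n <;> simp [sq_nonneg]
  · have hCS : (∑ i, x i) ^ 2 ≤ n * ∑ i, x i ^ 2 := by
      simpa using sq_sum_le_card_mul_sum_sq (s := univ) (f := x)
    have hn' : (1 : ℝ) < n := by exact_mod_cast hn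
    rw [div_pow, div_le_div_iff₀ (by nlinarith) (by positivity)]
    nlinarith

end Esymm

lemma S_one_sq_sub_S_zero_mul_S_two (n : ℕ) (α β : ℝ) (x : Fin n → ℝ) :
    S n α β x 1 ^ 2 - S n α β x 0 * S n α β x 2 =
      Esymm n x 1 ^ 2 - Esymm n x 2 + (α + β) * Esymm n x 1 + (α + β) ^ 2 - α * β := by
  simp only [S, Esymm_zero, Esymm_of_neg n x (show (-1 : ℤ) < 0 by norm_num),
    Esymm_of_neg n x (show (-2 : ℤ) < 0 by norm_num), Int.reduceSub]
  ring

theorem S1_sq_ge_S0_S2_general (n : ℕ) (α β : ℝ) (x : Fin n → ℝ)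
    (hα : 0 ≤ α) (hβ : 0 ≤ β) (hE1 : 0 ≤ Esymm n x 1) :
    S n α β x 1 ^ 2 - S n α β x 0 * S n α β x 2 =
      Esymm n x 1 ^ 2 - Esymm n x 2 + (α + β) * Esymm n x 1 + (α + β) ^ 2 - α * β ∧
    0 ≤ Esymm n x 1 ^ 2 - Esymm n x 2 + (α + β) * Esymm n x 1 + (α + β) ^ 2 - α * β := by
  refine ⟨S_one_sq_sub_S_zero_mul_S_two n α β x, ?_⟩
  have hNewton := Esymm_two_le_Esymm_one_sq n x
  have hlinear : 0 ≤ (α + β) * Esymm n x 1 := mul_nonneg (add_nonneg hα hβ) hE1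
  have hquadratic : 0 ≤ (α + β) ^ 2 - α * β := by
    nlinarith [sq_nonneg (α - β), sq_nonneg (α + β)]
  linarith

theorem S1_sq_ge_S0_S2 (n : ℕ) (α β : ℝ) (x : Fin n → ℝ)
    (hα : 0 ≤ α) (hβ : 0 ≤ β) (hE1 : 0 ≤ Esymm n x 1) (hE2 : 0 ≤ Esymm n x 2) :
    S n α β x 1 ^ 2 - S n α β x 0 * S n α β x 2 =
      Esymm n x 1 ^ 2 - Esymm n x 2 + (α + β) * Esymm n x 1 + (α + β) ^ 2 - α * β ∧
    0 ≤ Esymm n x 1 ^ 2 - Esymm n x 2 + (α + β) * Esymm n x 1 + (α + β) ^ 2 - α * β :=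
  S1_sq_ge_S0_S2_general n α β x hα hβ hE1
end

section
/- Let n = k+1 and z ∈ ℝ^n. Then k·n²·(E_k(z)² − E_{k-1}(z)E_{k+1}(z)) = ∑_{1≤i<j≤n} (z_i − z_j)² ∏_{l≠i,j} z_l². -/
open Finset

namespace Finset

variable {ι M : Type*}

theorem sum_sum_eq_sum_diag_add_sum_lt [LinearOrder ι] [AddCommMonoid M] (s : Finset ι)
    (F : ι → ι → M) :
    ∑ i ∈ s, ∑ j ∈ s, F i j = ∑ i ∈ s, F i i + ∑ i ∈ s, ∑ j ∈ s with i < j, (F i j + F j i) := by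
  have hsplit : ∀ i ∈ s, ∑ j ∈ s, F i j
      = F i i + (∑ j ∈ s with i < j, F i j + ∑ j ∈ s with j < i, F i j) := by
    intro i hi
    rw [sum_filter, sum_filter, ← sum_add_distrib, ← add_sum_erase s (F i) hi,
      ← add_sum_erase s (fun j => (if i < j then F i j else 0) + if j < i then F i j else 0) hi]
    simp only [lt_irrefl, if_false, add_zero, zero_add]
    refine congrArg _ (sum_congr rfl fun j hj => ?_)
    rcases lt_or_gt_of_ne (ne_of_mem_erase hj) with h | h <;> simp [h, h.not_gt]
  have hswap : ∑ i ∈ s, ∑ j ∈ s with j < i, F i j = ∑ i ∈ s, ∑ j ∈ s with i < j, F j i := by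
    simp_rw [sum_filter]
    exact sum_comm
  rw [sum_congr rfl hsplit, sum_add_distrib, sum_add_distrib, hswap, ← sum_add_distrib]
  simp_rw [sum_add_distrib]

theorem sum_powersetCard_two [LinearOrder ι] [AddCommMonoid M] (s : Finset ι)
    (f : Finset ι → M) :
    ∑ t ∈ s.powersetCard 2, f t = ∑ i ∈ s, ∑ j ∈ s with i < j, f {i, j} := by
  have himage : s.powersetCard 2 = {p ∈ s ×ˢ s | p.1 < p.2}.image fun p => {p.1, p.2} := by
    ext t
    simp only [mem_powersetCard, card_eq_two, mem_image, mem_filter, mem_product, Prod.exists]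
    constructor
    · rintro ⟨hts, x, y, hxy, rfl⟩
      rcases lt_or_gt_of_ne hxy with h | h
      · exact ⟨x, y, ⟨⟨hts (by simp), hts (by simp)⟩, h⟩, rfl⟩
      · exact ⟨y, x, ⟨⟨hts (by simp), hts (by simp)⟩, h⟩, pair_comm y x⟩
    · rintro ⟨x, y, ⟨⟨hx, hy⟩, h⟩, rfl⟩
      exact ⟨insert_subset hx (singleton_subset_iff.2 hy), x, y, h.ne, rfl⟩
  rw [himage, sum_image, sum_filter, sum_product]
  · simp_rw [sum_filter]
  · rintro ⟨a, b⟩ hab ⟨c, d⟩ hcd h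
    simp only [coe_filter, Set.mem_ofPred_eq, mem_product] at hab hcd h
    have hc : c ∈ ({a, b} : Finset ι) := h ▸ mem_insert_self c {d}
    have hd : d ∈ ({a, b} : Finset ι) := h ▸ by simp
    have ha : a ∈ ({c, d} : Finset ι) := h ▸ mem_insert_self a {b}
    simp only [mem_insert, mem_singleton] at hc hd ha
    ext <;> simp only <;> grind

theorem sum_lt_sub_sq [LinearOrder ι] {R : Type*} [CommRing R] (s : Finset ι) (f : ι → R) :
    ∑ i ∈ s, ∑ j ∈ s with i < j, (f i - f j) ^ 2
      = (#s - 1) * (∑ i ∈ s, f i) ^ 2 - 2 * #s * ∑ i ∈ s, ∑ j ∈ s with i < j, f i * f j := by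
  have hcross : (∑ i ∈ s, f i) ^ 2
      = ∑ i ∈ s, f i ^ 2 + 2 * ∑ i ∈ s, ∑ j ∈ s with i < j, f i * f j := by
    rw [sq, sum_mul_sum, sum_sum_eq_sum_diag_add_sum_lt]
    simp only [mul_sum, sq, mul_comm (f _) (f _), two_mul]
  have hsquares := sum_sum_eq_sum_diag_add_sum_lt s fun i _ => f i ^ 2
  simp only [sum_const, nsmul_eq_mul, ← mul_sum] at hsquares
  have hexpand : ∑ i ∈ s, ∑ j ∈ s with i < j, (f i - f j) ^ 2
      = ∑ i ∈ s, ∑ j ∈ s with i < j, (f i ^ 2 + f j ^ 2)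
        - 2 * ∑ i ∈ s, ∑ j ∈ s with i < j, f i * f j := by
    simp only [mul_sum, ← sum_sub_distrib]
    exact sum_congr rfl fun i _ => sum_congr rfl fun j _ => by ring
  rw [hexpand]
  linear_combination -(#s - 1 : R) * hcross - hsquares

theorem sum_powersetCard_card_sub [Fintype ι] [DecidableEq ι] [AddCommMonoid M] {m : ℕ}
    (hm : m ≤ Fintype.card ι) (f : Finset ι → M) :
    ∑ s ∈ univ.powersetCard (Fintype.card ι - m), f s
      = ∑ t ∈ univ.powersetCard m, f (univ \ t) := by
  refine sum_nbij' (univ \ ·) (univ \ ·) ?_ ?_ (by simp) (by simp) (by simp)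
  · intro s hs
    simp only [mem_powersetCard, subset_univ, true_and] at hs ⊢
    rw [card_univ_sdiff, hs]
    omega
  · intro t ht
    simp only [mem_powersetCard, subset_univ, true_and] at ht ⊢
    rw [card_univ_sdiff, ht]

theorem prod_univ_sdiff_singleton_eq_mul [Fintype ι] [DecidableEq ι] [CommMonoid M] {i j : ι}
    (hij : i ≠ j) (z : ι → M) :
    ∏ l ∈ univ \ {j}, z l = z i * ∏ l ∈ univ \ {i, j}, z l := by
  rw [← mul_prod_erase _ z (by simpa using hij), sdiff_insert]

end Finset

theorem sum_lt_sub_sq_mul_prod_univ_sdiff_pair {ι R : Type*} [Fintype ι] [LinearOrder ι]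
    [CommRing R] (z : ι → R) :
    ∑ i, ∑ j ∈ univ with i < j, (z i - z j) ^ 2 * ∏ l ∈ univ \ {i, j}, z l ^ 2
      = (Fintype.card ι - 1) * (∑ i, ∏ l ∈ univ \ {i}, z l) ^ 2
        - 2 * Fintype.card ι * (∑ i, ∑ j ∈ univ with i < j, ∏ l ∈ univ \ {i, j}, z l)
          * ∏ l, z l := by
  set a : ι → R := fun i => ∏ l ∈ univ \ {i}, z l
  have hpair : ∀ i j, i ≠ j →
      (z i - z j) ^ 2 * ∏ l ∈ univ \ {i, j}, z l ^ 2 = (a i - a j) ^ 2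
        ∧ a i * a j = (∏ l ∈ univ \ {i, j}, z l) * ∏ l, z l := by
    intro i j hij
    have hai : a i = z j * ∏ l ∈ univ \ {i, j}, z l := by
      rw [pair_comm]; exact prod_univ_sdiff_singleton_eq_mul hij.symm z
    have haj : a j = z i * ∏ l ∈ univ \ {i, j}, z l := prod_univ_sdiff_singleton_eq_mul hij z
    have hprod : ∏ l, z l = z i * a i := by
      rw [← mul_prod_erase univ z (mem_univ i), erase_eq]
    rw [prod_pow, hprod, hai, haj]
    constructor <;> ring
  calc ∑ i, ∑ j ∈ univ with i < j, (z i - z j) ^ 2 * ∏ l ∈ univ \ {i, j}, z l ^ 2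
      = ∑ i, ∑ j ∈ univ with i < j, (a i - a j) ^ 2 :=
        sum_congr rfl fun i _ => sum_congr rfl fun j hj => (hpair i j (mem_filter.1 hj).2.ne).1
    _ = (#univ - 1) * (∑ i, a i) ^ 2 - 2 * #univ * ∑ i, ∑ j ∈ univ with i < j, a i * a j :=
        sum_lt_sub_sq univ a
    _ = _ := by
      rw [card_univ, mul_assoc _ _ (∏ l, z l), sum_mul]
      simp_rw [sum_mul]
      congr 2
      exact sum_congr rfl fun i _ => sum_congr rfl fun j hj => (hpair i j (mem_filter.1 hj).2.ne).2

theorem esymm_card (k : ℕ) (z : Fin (k + 1) → ℝ) : esymm (k + 1) z ((k : ℤ) + 1) = ∏ i, z i := by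
  rw [esymm, if_pos (by positivity),
    show ((k : ℤ) + 1).toNat = #(univ : Finset (Fin (k + 1))) by simp, powersetCard_self,
    sum_singleton]

theorem esymm_card_sub_one (k : ℕ) (z : Fin (k + 1) → ℝ) :
    esymm (k + 1) z k = ∑ i, ∏ l ∈ univ \ {i}, z l := by
  rw [esymm, if_pos (by positivity),
    show (k : ℤ).toNat = Fintype.card (Fin (k + 1)) - 1 by simp,
    sum_powersetCard_card_sub (by simp), powersetCard_one, sum_map]
  rfl

theorem esymm_card_sub_two {k : ℕ} (hk : 0 < k) (z : Fin (k + 1) → ℝ) :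
    esymm (k + 1) z ((k : ℤ) - 1) = ∑ i, ∑ j ∈ univ with i < j, ∏ l ∈ univ \ {i, j}, z l := by
  rw [esymm, if_pos (by omega),
    show ((k : ℤ) - 1).toNat = Fintype.card (Fin (k + 1)) - 2 by simp,
    sum_powersetCard_card_sub (by simp; omega), sum_powersetCard_two]

theorem top_newton_identity (k : ℕ) (z : Fin (k + 1) → ℝ) :
    (k : ℝ) * ((k : ℝ) + 1) ^ 2 *
        (Esymm (k + 1) z k ^ 2 - Esymm (k + 1) z ((k : ℤ) - 1) * Esymm (k + 1) z ((k : ℤ) + 1)) =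
      ∑ i : Fin (k + 1), ∑ j ∈ Finset.univ.filter (fun j => i < j),
        (z i - z j) ^ 2 * ∏ l ∈ Finset.univ \ {i, j}, (z l) ^ 2 := by
  rcases Nat.eq_zero_or_pos k with rfl | hk
  · simp [filter_singleton]
  have hchoose : ((k + 1).choose ((k : ℤ) - 1).toNat : ℝ) = (k + 1) * k / 2 := by
    rw [show ((k : ℤ) - 1).toNat = k + 1 - 2 by omega, Nat.choose_symm (by omega),
      Nat.cast_choose_two]
    push_cast
    ring
  rw [sum_lt_sub_sq_mul_prod_univ_sdiff_pair, Esymm, Esymm, Esymm, esymm_card,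
    esymm_card_sub_one, esymm_card_sub_two hk, hchoose]
  simp only [Int.toNat_natCast, Int.toNat_natCast_add_one, Nat.choose_succ_self_right,
    Nat.choose_self, Fintype.card_fin, Nat.cast_add, Nat.cast_one]
  field_simp
  ring
end

section
/- Let n = k+1, s = k−1, α ∈ ℝ, and z ∈ ℝ^n. Define S_{m;s}(z) = ∑_{i=0}^{s} C(s,i) α^i E_{m-i}(z). Then S_{k;s}(z)² − S_{k-1;s}(z)S_{k+1;s}(z) = E_k(z+αe)² − E_{k-1}(z+αe)E_{k+1}(z+αe), where e = (1,1,...,1) ∈ ℝ^n. -/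
/-- `S_{m;s}(x) = ∑_{i=0}^{s} C(s,i) α^i E_{m-i}(x)`. -/
noncomputable def Ss (n : ℕ) (α : ℝ) (x : Fin n → ℝ) (s : ℕ) (m : ℤ) : ℝ :=
  ∑ i ∈ Finset.range (s + 1), (s.choose i : ℝ) * α ^ i * Esymm n x (m - i)

/-! Shifting every variable by `α` turns `∏ (X + zᵢ)` into its Taylor shift, which gives the
translation identity `E_m(z + αe) = S_{m;m}(z)`. With `s = k - 1` and `a, b, c` the values of
`S_{k-1;s}, S_{k;s}, S_{k+1;s}`, Pascal's rule `S_{m;s+1} = S_{m;s} + α S_{m-1;s}` then gives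
`E_{k-1}, E_k, E_{k+1}` of `z + αe` as `a`, `b + α a`, `c + 2α b + α² a`, and
`(b + α a)² - a (c + 2α b + α² a) = b² - a c`. -/

open Finset Polynomial

lemma Nat.choose_sub_add_mul_choose_sub {n m l : ℕ} (hl : l ≤ m) (hm : m ≤ n) :
    (n - m + l).choose l * n.choose (m - l) = m.choose l * n.choose m := by
  have h := Nat.choose_mul (n := n) (Nat.sub_le m l)
  rw [Nat.choose_symm hl, show n - (m - l) = n - m + l by omega,
    show m - (m - l) = l by omega] at h
  rw [mul_comm, ← h, mul_comm]

lemma prod_X_add_C_add_const {R ι : Type*} [CommRing R] (s : Finset ι) (x : ι → R) (a : R) :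
    ∏ i ∈ s, (X + C (x i + a)) = taylor a (∏ i ∈ s, (X + C (x i))) := by
  change _ = taylorAlgHom a _
  rw [map_prod]
  simp [add_assoc, add_comm (C a)]

lemma esymm_natCast_s13 (n : ℕ) (x : Fin n → ℝ) (m : ℕ) :
    esymm n x m = ∑ s ∈ univ.powersetCard m, ∏ i ∈ s, x i := by
  simp [esymm]

lemma coeff_prod_X_add_C_eq_esymm {n m : ℕ} (hm : m ≤ n) (x : Fin n → ℝ) :
    (∏ i, (X + C (x i))).coeff (n - m) = esymm n x m := by
  rw [prod_X_add_C_coeff _ x (by simp), esymm_natCast_s13, card_univ, Fintype.card_fin,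
    Nat.sub_sub_self hm]

lemma esymm_add_const {n m : ℕ} (hm : m ≤ n) (x : Fin n → ℝ) (α : ℝ) :
    esymm n (fun i => x i + α) m
      = ∑ l ∈ range (m + 1), ((n - m + l).choose l : ℝ) * α ^ l * esymm n x ↑(m - l) := by
  set P := ∏ i, (X + C (x i))
  have hdeg : (hasseDeriv (n - m) P).natDegree < m + 1 := by
    have hP : P.natDegree ≤ n := (natDegree_prod_le _ _).trans (by simp)
    have := natDegree_hasseDeriv_le P (n - m)
    omega
  rw [← coeff_prod_X_add_C_eq_esymm hm, prod_X_add_C_add_const, taylor_coeff,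
    eval_eq_sum_range' hdeg]
  refine sum_congr rfl fun l hl => ?_
  have hlm : l ≤ m := Nat.lt_succ_iff.mp (mem_range.mp hl)
  rw [hasseDeriv_coeff, show l + (n - m) = n - (m - l) by omega,
    coeff_prod_X_add_C_eq_esymm (by omega), show n - (m - l) = n - m + l by omega,
    Nat.choose_symm_add]
  ring

lemma Esymm_add_const {n m : ℕ} (hm : m ≤ n) (x : Fin n → ℝ) (α : ℝ) :
    Esymm n (fun i => x i + α) m = Ss n α x m m := by
  rw [Esymm, esymm_add_const hm, sum_div]
  refine sum_congr rfl fun l hl => ?_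
  have hlm : l ≤ m := Nat.lt_succ_iff.mp (mem_range.mp hl)
  have hchoose : ((n - m + l).choose l : ℝ) * n.choose (m - l) = m.choose l * n.choose m := by
    exact_mod_cast Nat.choose_sub_add_mul_choose_sub hlm hm
  have hpos : (0 : ℝ) < n.choose m := by exact_mod_cast Nat.choose_pos hm
  have hpos' : (0 : ℝ) < n.choose (m - l) := by exact_mod_cast Nat.choose_pos (by omega)
  rw [Esymm, ← Nat.cast_sub hlm, Int.toNat_natCast, Int.toNat_natCast]
  field_simp
  linear_combination α ^ l * esymm n x ↑(m - l) * hchoose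

lemma Ss_succ (n : ℕ) (α : ℝ) (x : Fin n → ℝ) (s : ℕ) (m : ℤ) :
    Ss n α x (s + 1) m = Ss n α x s m + α * Ss n α x s (m - 1) := by
  have := sum_choose_succ_mul (fun i _ => α ^ i * Esymm n x (m - i)) s
  simp only [Ss, mul_assoc, this, mul_sum, add_right_inj]
  refine sum_congr rfl fun i _ => ?_
  rw [pow_succ, Nat.cast_succ, sub_add_eq_sub_sub, sub_right_comm]
  ring

theorem Ss_translation_identity (k : ℕ) (hk : 1 ≤ k) (α : ℝ) (z : Fin (k + 1) → ℝ) :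
    Ss (k + 1) α z (k - 1) k ^ 2
        - Ss (k + 1) α z (k - 1) ((k : ℤ) - 1) * Ss (k + 1) α z (k - 1) ((k : ℤ) + 1) =
      Esymm (k + 1) (fun i => z i + α) k ^ 2
        - Esymm (k + 1) (fun i => z i + α) ((k : ℤ) - 1)
          * Esymm (k + 1) (fun i => z i + α) ((k : ℤ) + 1) := by
  obtain ⟨s, rfl⟩ : ∃ s, k = s + 1 := ⟨k - 1, by omega⟩
  simp only [Nat.add_sub_cancel, Nat.cast_add, Nat.cast_one, add_sub_cancel_right]
  have e₀ : Esymm _ (fun i => z i + α) s = Ss _ α z s s := Esymm_add_const (by omega) z α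
  have e₁ : Esymm _ (fun i => z i + α) (s + 1) = Ss _ α z s (s + 1) + α * Ss _ α z s s := by
    rw [← Nat.cast_succ, Esymm_add_const (by omega), Ss_succ, Nat.cast_succ,
      add_sub_cancel_right]
  have e₂ : Esymm _ (fun i => z i + α) (s + 1 + 1)
      = Ss _ α z s (s + 1 + 1) + 2 * α * Ss _ α z s (s + 1) + α ^ 2 * Ss _ α z s s := by
    rw [← Nat.cast_succ, ← Nat.cast_succ, Esymm_add_const le_rfl, Ss_succ, Ss_succ, Ss_succ]
    push_cast
    simp only [add_sub_cancel_right]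
    ring
  rw [e₀, e₁, e₂]
  ring
end

section
/- For any k ≥ 2, n = k+1, s = k−1, α ∈ ℝ, and z ∈ ℝ^n, the Newton-type inequality S_{k;s}(z)² ≥ S_{k-1;s}(z)S_{k+1;s}(z) holds, where S_{m;s}(z) = ∑_{i=0}^s C(s,i)α^i E_{m-i}(z). Moreover k·n²·(S_{k;s}(z)² − S_{k-1;s}(z)S_{k+1;s}(z)) = ∑_{1≤i<j≤n}(z_i − z_j)² ∏_{l≠i,j}(z_l + α)². -/
/-!
Let `F(X) = ∏ₗ (X + z_l)`; by Vieta its coefficient of `X ^ j` is `σ_{n-j}(z)`. For `s = k - 1`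
the weights `C(k-1, i) / C(k+1, m-i)` turn the three sums `S_{m;s}` into derivatives of `F` at `α`:
`k n S_{k-1} = F''`, `k n S_k = k F' - α F''`, `k n S_{k+1} = α² F'' - 2kα F' + k n F`, so that
`k n² (S_k² - S_{k-1} S_{k+1}) = k F'² - n F F''`. With `a_i = ∏_{l ≠ i} (z_l + α)` one has
`F' = ∑ a_i` and `F F'' = (∑ a_i)² - ∑ a_i²`, so the right-hand side is `n ∑ a_i² - (∑ a_i)²`,
which by Lagrange's identity is `∑_{i<j} (a_i - a_j)²`, and
`a_i - a_j = (z_j - z_i) ∏_{l ≠ i,j} (z_l + α)`.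
-/

open Finset Polynomial

section ProdErase

variable {R ι : Type*} [CommRing R] [DecidableEq ι] {s : Finset ι} {i j : ι}

theorem prod_mul_prod_erase_erase (w : ι → R) (hi : i ∈ s) (hj : j ∈ s.erase i) :
    (∏ l ∈ s, w l) * ∏ l ∈ (s.erase i).erase j, w l
      = (∏ l ∈ s.erase i, w l) * ∏ l ∈ s.erase j, w l := by
  have hi' : i ∈ s.erase j := mem_erase.2 ⟨(ne_of_mem_erase hj).symm, hi⟩
  rw [← mul_prod_erase s w hi, ← mul_prod_erase (s.erase j) w hi', erase_right_comm]
  ring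

theorem prod_erase_sub_prod_erase (w : ι → R) (hi : i ∈ s) (hj : j ∈ s.erase i) :
    ∏ l ∈ s.erase i, w l - ∏ l ∈ s.erase j, w l
      = (w j - w i) * ∏ l ∈ (s.erase i).erase j, w l := by
  have hi' : i ∈ s.erase j := mem_erase.2 ⟨(ne_of_mem_erase hj).symm, hi⟩
  rw [← mul_prod_erase (s.erase i) w hj, ← mul_prod_erase (s.erase j) w hi', erase_right_comm]
  ring

theorem prod_mul_sum_sum_prod_erase_erase (w : ι → R) :
    (∏ l ∈ s, w l) * ∑ i ∈ s, ∑ j ∈ s.erase i, ∏ l ∈ (s.erase i).erase j, w l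
      = (∑ i ∈ s, ∏ l ∈ s.erase i, w l) ^ 2 - ∑ i ∈ s, (∏ l ∈ s.erase i, w l) ^ 2 := by
  have hrow : ∀ i ∈ s, (∏ l ∈ s, w l) * ∑ j ∈ s.erase i, ∏ l ∈ (s.erase i).erase j, w l
      = (∏ l ∈ s.erase i, w l) * (∑ j ∈ s, ∏ l ∈ s.erase j, w l)
        - (∏ l ∈ s.erase i, w l) ^ 2 := by
    intro i hi
    rw [mul_sum, sum_congr rfl fun j hj => prod_mul_prod_erase_erase w hi hj, ← mul_sum,
      sum_erase_eq_sub hi]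
    ring
  rw [mul_sum, sum_congr rfl hrow, sum_sub_distrib, ← sum_mul, sq]

end ProdErase

section Lagrange

variable {ι : Type*} [Fintype ι] [LinearOrder ι]

theorem sum_sum_eq_sum_sum_lt_add {M : Type*} [AddCommMonoid M] (g : ι → ι → M) :
    ∑ i, ∑ j, g i j = ∑ i, ∑ j ∈ univ.filter (fun j => i < j), (g i j + g j i) + ∑ i, g i i := by
  have hsplit : ∀ i j, g i j = ((if i < j then g i j else 0) + if j < i then g i j else 0)
      + if i = j then g i j else 0 := by
    intro i j
    rcases lt_trichotomy i j with h | rfl | h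
    · simp [h, h.ne, h.not_gt]
    · simp
    · simp [h, h.ne', h.not_gt]
  have hswap : ∑ i, ∑ j, (if j < i then g i j else 0) = ∑ i, ∑ j, if i < j then g j i else 0 :=
    sum_comm
  calc ∑ i, ∑ j, g i j
      = ∑ i, ∑ j, (if i < j then g i j else 0) + ∑ i, ∑ j, (if j < i then g i j else 0)
          + ∑ i, ∑ j, (if i = j then g i j else 0) := by
        simp only [← sum_add_distrib, ← hsplit]
    _ = _ := by
        simp only [hswap, sum_filter, sum_add_distrib, sum_ite_eq, mem_univ, if_true]

theorem sum_sum_lt_sub_sq (a : ι → ℝ) :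
    ∑ i, ∑ j ∈ univ.filter (fun j => i < j), (a i - a j) ^ 2
      = Fintype.card ι * ∑ i, a i ^ 2 - (∑ i, a i) ^ 2 := by
  have hfull : ∑ i, ∑ j, (a i - a j) ^ 2
      = 2 * (Fintype.card ι * ∑ i, a i ^ 2 - (∑ i, a i) ^ 2) := by
    simp only [sub_sq, sum_add_distrib, sum_sub_distrib, sum_const, card_univ, ← mul_sum,
      ← sum_mul, nsmul_eq_mul]
    ring
  have hsym : ∀ i j, (a i - a j) ^ 2 + (a j - a i) ^ 2 = 2 * (a i - a j) ^ 2 := fun i j => by ring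
  rw [sum_sum_eq_sum_sum_lt_add, sum_congr rfl fun i _ => sum_congr rfl fun j _ => hsym i j]
    at hfull
  simp only [sub_self, zero_pow two_ne_zero, sum_const_zero, add_zero, ← mul_sum] at hfull
  exact mul_left_cancel₀ two_ne_zero hfull

end Lagrange

section Derivative

variable {R ι : Type*} [CommRing R] [DecidableEq ι] (s : Finset ι) (r : ι → R)

theorem derivative_prod_X_add_C :
    derivative (∏ i ∈ s, (X + C (r i))) = ∑ i ∈ s, ∏ j ∈ s.erase i, (X + C (r j)) := by
  simp [derivative_prod_finset]

theorem derivative_derivative_prod_X_add_C :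
    derivative (derivative (∏ i ∈ s, (X + C (r i))))
      = ∑ i ∈ s, ∑ j ∈ s.erase i, ∏ l ∈ (s.erase i).erase j, (X + C (r l)) := by
  simp only [derivative_prod_X_add_C, derivative_sum]

variable {p : R[X]} {N : ℕ}

theorem eval_derivative_eq_sum_range (hp : p.natDegree ≤ N + 1) (x : R) :
    (derivative p).eval x = ∑ j ∈ range (N + 1), p.coeff (j + 1) * (j + 1) * x ^ j := by
  rw [eval_eq_sum_range' (n := N + 1) (by have := natDegree_derivative_le p; omega)]
  simp only [coeff_derivative]

theorem eval_derivative_derivative_eq_sum_range (hp : p.natDegree ≤ N + 2) (x : R) :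
    (derivative (derivative p)).eval x
      = ∑ j ∈ range (N + 1), p.coeff (j + 2) * (j + 2) * (j + 1) * x ^ j := by
  rw [eval_derivative_eq_sum_range (N := N) (by have := natDegree_derivative_le p; omega)]
  refine sum_congr rfl fun j _ => ?_
  rw [coeff_derivative]
  push_cast
  ring

end Derivative

theorem Nat.choose_mul_eq_choose_add_two_add_two (s i : ℕ) :
    (s + 1) * (s + 2) * s.choose i = (i + 1) * (i + 2) * (s + 2).choose (i + 2) := by
  have h₁ := Nat.add_one_mul_choose_eq s i
  have h₂ := Nat.add_one_mul_choose_eq (s + 1) (i + 1)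
  calc (s + 1) * (s + 2) * s.choose i = (s + 2) * ((s + 1) * s.choose i) := by ring
    _ = (i + 1) * ((s + 1 + 1) * (s + 1).choose (i + 1)) := by rw [h₁]; ring
    _ = _ := by rw [h₂]; ring

theorem Nat.choose_mul_eq_choose_add_two_add_one (s i : ℕ) :
    (s + 1) * (s + 2) * s.choose i = (i + 1) * (s + 1 - i) * (s + 2).choose (i + 1) := by
  have h := Nat.choose_succ_right_eq (s + 2) (i + 1)
  rw [show s + 2 - (i + 1) = s + 1 - i by omega] at h
  rw [Nat.choose_mul_eq_choose_add_two_add_two, mul_assoc, mul_assoc, mul_comm (i + 2), h]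
  ring

theorem Nat.choose_mul_eq_choose_add_two (s i : ℕ) :
    (s + 1) * (s + 2) * s.choose i = (s + 1 - i) * (s + 2 - i) * (s + 2).choose i := by
  have h := Nat.choose_succ_right_eq (s + 2) i
  rw [Nat.choose_mul_eq_choose_add_two_add_one, mul_comm (i + 1), mul_assoc, mul_assoc,
    mul_comm (i + 1), h]
  ring

noncomputable def vietaPoly (n : ℕ) (z : Fin n → ℝ) : ℝ[X] := ∏ l, (X + C (z l))

section VietaPoly

variable {n : ℕ} (α : ℝ) (z : Fin n → ℝ)

theorem natDegree_vietaPoly_le : (vietaPoly n z).natDegree ≤ n :=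
  (natDegree_prod_le _ _).trans (by simp)

theorem Esymm_natCast_sub {j : ℕ} (hj : j ≤ n) :
    Esymm n z ((n : ℤ) - j) = (vietaPoly n z).coeff j / n.choose j := by
  have h : (n : ℤ) - j = ((n - j : ℕ) : ℤ) := by omega
  rw [Esymm, esymm, h, if_pos (Int.natCast_nonneg _), Int.toNat_natCast, Nat.choose_symm hj,
    vietaPoly, prod_X_add_C_coeff _ _ (by simpa using hj), card_univ, Fintype.card_fin]

theorem eval_vietaPoly : (vietaPoly n z).eval α = ∏ l, (z l + α) := by
  simp [vietaPoly, eval_prod, add_comm]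

theorem eval_derivative_vietaPoly :
    (derivative (vietaPoly n z)).eval α = ∑ i, ∏ l ∈ univ.erase i, (z l + α) := by
  simp [vietaPoly, derivative_prod_X_add_C, eval_prod, eval_finsetSum, add_comm]

theorem eval_derivative_derivative_vietaPoly :
    (derivative (derivative (vietaPoly n z))).eval α
      = ∑ i, ∑ j ∈ univ.erase i, ∏ l ∈ (univ.erase i).erase j, (z l + α) := by
  simp [vietaPoly, derivative_derivative_prod_X_add_C, eval_prod, eval_finsetSum, add_comm]

theorem sq_prod_erase_sub_prod_erase {i j : Fin n} (hij : i < j) :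
    (∏ l ∈ univ.erase i, (z l + α) - ∏ l ∈ univ.erase j, (z l + α)) ^ 2
      = (z i - z j) ^ 2 * ∏ l ∈ univ \ {i, j}, (z l + α) ^ 2 := by
  have hj : j ∈ univ.erase i := mem_erase.2 ⟨hij.ne', mem_univ j⟩
  have hset : (univ : Finset (Fin n)) \ {i, j} = (univ.erase i).erase j := by
    ext l; simp [and_comm]
  rw [prod_erase_sub_prod_erase (fun l => z l + α) (mem_univ i) hj, hset, prod_pow]
  ring

end VietaPoly

-- `s + 1` plays the role of `k` and `s + 2` that of `n`.
section Ss

variable {s : ℕ} (α : ℝ) (z : Fin (s + 2) → ℝ)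

theorem mul_choose_mul_Esymm {i j : ℕ} (hj : j ≤ s + 2) {w : ℝ}
    (hw : ((s + 1) * (s + 2) * s.choose i : ℝ) = w * (s + 2).choose j) :
    (s + 1) * (s + 2) * (s.choose i * α ^ i * Esymm (s + 2) z ((s + 2 : ℕ) - j : ℤ))
      = w * (vietaPoly (s + 2) z).coeff j * α ^ i := by
  have hne : ((s + 2).choose j : ℝ) ≠ 0 := by exact_mod_cast (Nat.choose_pos hj).ne'
  rw [Esymm_natCast_sub z hj]
  field_simp
  linear_combination (vietaPoly (s + 2) z).coeff j * α ^ i * hw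

theorem mul_Ss_self_eq :
    (s + 1) * (s + 2) * Ss (s + 2) α z s s
      = (derivative (derivative (vietaPoly (s + 2) z))).eval α := by
  rw [eval_derivative_derivative_eq_sum_range (natDegree_vietaPoly_le z), Ss, mul_sum]
  refine sum_congr rfl fun i hi => ?_
  rw [show (s : ℤ) - i = ((s + 2 : ℕ) - (i + 2 : ℕ) : ℤ) by push_cast; ring,
    mul_choose_mul_Esymm α z (j := i + 2) (by simp at hi; omega) (w := (i + 1) * (i + 2))
      (by exact_mod_cast Nat.choose_mul_eq_choose_add_two_add_two s i)]
  ring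

theorem mul_Ss_add_one_eq :
    (s + 1) * (s + 2) * Ss (s + 2) α z s ((s : ℤ) + 1)
      = (s + 1) * (derivative (vietaPoly (s + 2) z)).eval α
        - α * (derivative (derivative (vietaPoly (s + 2) z))).eval α := by
  set τ := (vietaPoly (s + 2) z).coeff
  have hS : (s + 1) * (s + 2) * Ss (s + 2) α z s ((s : ℤ) + 1)
      = ∑ i ∈ range (s + 2), (i + 1) * ((s : ℝ) + 1 - i) * τ (i + 1) * α ^ i := by
    rw [sum_range_succ, Ss, mul_sum]
    simp only [Nat.cast_add, Nat.cast_one, sub_self, mul_zero, zero_mul, add_zero]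
    refine sum_congr rfl fun i hi => ?_
    have hi : i ≤ s := by simp at hi; omega
    have hw := congrArg (Nat.cast (R := ℝ)) (Nat.choose_mul_eq_choose_add_two_add_one s i)
    push_cast [Nat.cast_sub (show i ≤ s + 1 by omega)] at hw
    rw [show (s : ℤ) + 1 - i = ((s + 2 : ℕ) - (i + 1 : ℕ) : ℤ) by push_cast; ring,
      mul_choose_mul_Esymm α z (by omega) hw]
  have hα1B : α * (derivative (derivative (vietaPoly (s + 2) z))).eval α
      = ∑ j ∈ range (s + 2), τ (j + 1) * (j + 1) * j * α ^ j := by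
    rw [eval_derivative_derivative_eq_sum_range (natDegree_vietaPoly_le z), mul_sum]
    conv_rhs => rw [sum_range_succ']
    simp only [Nat.cast_zero, mul_zero, zero_mul, add_zero]
    refine sum_congr rfl fun j _ => ?_
    push_cast
    ring
  rw [hS, hα1B, eval_derivative_eq_sum_range (natDegree_vietaPoly_le z), mul_sum,
    ← sum_sub_distrib]
  refine sum_congr rfl fun j _ => ?_
  ring

theorem mul_Ss_add_two_eq :
    (s + 1) * (s + 2) * Ss (s + 2) α z s ((s : ℤ) + 2)
      = α ^ 2 * (derivative (derivative (vietaPoly (s + 2) z))).eval α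
        - 2 * (s + 1) * α * (derivative (vietaPoly (s + 2) z)).eval α
        + (s + 1) * (s + 2) * (vietaPoly (s + 2) z).eval α := by
  set τ := (vietaPoly (s + 2) z).coeff
  have hS : (s + 1) * (s + 2) * Ss (s + 2) α z s ((s : ℤ) + 2)
      = ∑ i ∈ range (s + 3), ((s : ℝ) + 1 - i) * ((s : ℝ) + 2 - i) * τ i * α ^ i := by
    rw [sum_range_succ, sum_range_succ, Ss, mul_sum]
    simp only [Nat.cast_add, Nat.cast_one, Nat.cast_ofNat, sub_self, mul_zero, zero_mul, add_zero]
    refine sum_congr rfl fun i hi => ?_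
    have hi : i ≤ s := by simp at hi; omega
    have hw := congrArg (Nat.cast (R := ℝ)) (Nat.choose_mul_eq_choose_add_two s i)
    push_cast [Nat.cast_sub (show i ≤ s + 1 by omega), Nat.cast_sub (show i ≤ s + 2 by omega)] at hw
    rw [show (s : ℤ) + 2 - i = ((s + 2 : ℕ) - (i : ℕ) : ℤ) by push_cast; ring,
      mul_choose_mul_Esymm α z (by omega) hw]
  have hα2B : α ^ 2 * (derivative (derivative (vietaPoly (s + 2) z))).eval α
      = ∑ j ∈ range (s + 3), τ j * j * (j - 1) * α ^ j := by
    rw [eval_derivative_derivative_eq_sum_range (natDegree_vietaPoly_le z), mul_sum]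
    conv_rhs => rw [sum_range_succ', sum_range_succ']
    simp only [Nat.cast_zero, zero_add, Nat.cast_one, sub_self, mul_zero, zero_mul, add_zero]
    refine sum_congr rfl fun j _ => ?_
    push_cast
    ring
  have hα1A : α * (derivative (vietaPoly (s + 2) z)).eval α
      = ∑ j ∈ range (s + 3), τ j * j * α ^ j := by
    rw [eval_derivative_eq_sum_range (natDegree_vietaPoly_le z), mul_sum]
    conv_rhs => rw [sum_range_succ']
    simp only [Nat.cast_zero, mul_zero, zero_mul, add_zero]
    refine sum_congr rfl fun j _ => ?_
    push_cast
    ring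
  rw [hS, hα2B, mul_assoc _ α, hα1A, eval_eq_sum_range' (n := s + 3)
    (by have := natDegree_vietaPoly_le z; omega), mul_sum, mul_sum, ← sum_sub_distrib,
    ← sum_add_distrib]
  refine sum_congr rfl fun j _ => ?_
  ring

theorem mul_newton_gap_eq_eval :
    (s + 1) * (s + 2) ^ 2
        * (Ss (s + 2) α z s ((s : ℤ) + 1) ^ 2
          - Ss (s + 2) α z s s * Ss (s + 2) α z s ((s : ℤ) + 2))
      = (s + 1) * (derivative (vietaPoly (s + 2) z)).eval α ^ 2
        - (s + 2) * ((vietaPoly (s + 2) z).eval α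
          * (derivative (derivative (vietaPoly (s + 2) z))).eval α) := by
  apply mul_left_cancel₀ (show ((s : ℝ) + 1) ≠ 0 by positivity)
  linear_combination
    (Ss (s + 2) α z s ((s : ℤ) + 1) * (s + 1) * (s + 2)
        + (s + 1) * (derivative (vietaPoly (s + 2) z)).eval α
        - α * (derivative (derivative (vietaPoly (s + 2) z))).eval α) * mul_Ss_add_one_eq α z
      - Ss (s + 2) α z s ((s : ℤ) + 2) * (s + 1) * (s + 2) * mul_Ss_self_eq α z
      - (derivative (derivative (vietaPoly (s + 2) z))).eval α * mul_Ss_add_two_eq α z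

theorem mul_newton_gap_eq_sum_sq :
    (s + 1) * (s + 2) ^ 2
        * (Ss (s + 2) α z s ((s : ℤ) + 1) ^ 2
          - Ss (s + 2) α z s s * Ss (s + 2) α z s ((s : ℤ) + 2))
      = ∑ i, ∑ j ∈ univ.filter (fun j => i < j),
          (z i - z j) ^ 2 * ∏ l ∈ univ \ {i, j}, (z l + α) ^ 2 := by
  rw [mul_newton_gap_eq_eval, eval_vietaPoly, eval_derivative_derivative_vietaPoly,
    prod_mul_sum_sum_prod_erase_erase, eval_derivative_vietaPoly,
    sum_congr rfl fun i _ => sum_congr rfl fun j hj =>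
      (sq_prod_erase_sub_prod_erase α z (mem_filter.1 hj).2).symm,
    sum_sum_lt_sub_sq, Fintype.card_fin]
  push_cast
  ring

end Ss

theorem Ss_newton_top (k : ℕ) (hk : 2 ≤ k) (α : ℝ) (z : Fin (k + 1) → ℝ) :
    Ss (k + 1) α z (k - 1) k ^ 2 ≥
      Ss (k + 1) α z (k - 1) ((k : ℤ) - 1) * Ss (k + 1) α z (k - 1) ((k : ℤ) + 1) ∧
    (k : ℝ) * ((k : ℝ) + 1) ^ 2 *
        (Ss (k + 1) α z (k - 1) k ^ 2
          - Ss (k + 1) α z (k - 1) ((k : ℤ) - 1) * Ss (k + 1) α z (k - 1) ((k : ℤ) + 1)) =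
      ∑ i : Fin (k + 1), ∑ j ∈ Finset.univ.filter (fun j => i < j),
        (z i - z j) ^ 2 * ∏ l ∈ Finset.univ \ {i, j}, (z l + α) ^ 2 := by
  obtain ⟨s, rfl⟩ : ∃ s, k = s + 1 := ⟨k - 1, by omega⟩
  have hgap := mul_newton_gap_eq_sum_sq α z
  rw [show ((s + 1 : ℕ) : ℤ) - 1 = s by push_cast; ring,
    show ((s + 1 : ℕ) : ℤ) + 1 = s + 2 by push_cast; ring, Nat.add_sub_cancel]
  push_cast
  refine ⟨?_, by linear_combination hgap⟩
  have hnonneg : 0 ≤ ∑ i, ∑ j ∈ univ.filter (fun j => i < j),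
      (z i - z j) ^ 2 * ∏ l ∈ univ \ {i, j}, (z l + α) ^ 2 := by positivity
  rw [← hgap] at hnonneg
  exact sub_nonneg.1 (nonneg_of_mul_nonneg_right hnonneg (by positivity))
end

section
/- Let n = k+1, s = k−1, α ∈ ℝ, and z ∈ ℝ^n with z_1 = z_2 = −α. Then S_{k;s}(z) = (−2α/(k(k+1)))·P, S_{k-1;s}(z) = (2/(k(k+1)))·P, and S_{k+1;s}(z) = (2α²/(k(k+1)))·P, where P = σ_{k-1}(z') + ασ_{k-2}(z') + ⋯ + α^{k-1} with z' = (z_3,...,z_n). In particular, if P ≠ 0 then S_{k;s}(z)/S_{k-1;s}(z) = S_{k+1;s}(z)/S_{k;s}(z) = −α. -/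
open Finset

theorem esymm_of_neg (n : ℕ) (x : Fin n → ℝ) {m : ℤ} (hm : m < 0) : esymm n x m = 0 := by
  simp [esymm, not_le.2 hm]

theorem esymm_of_lt (n : ℕ) (x : Fin n → ℝ) {m : ℤ} (hm : (n : ℤ) < m) : esymm n x m = 0 := by
  rw [esymm, if_pos (by omega), powersetCard_eq_empty.2 (by simp; omega), sum_empty]

theorem Multiset.esymm_cons_succ_s16 (a : ℝ) (s : Multiset ℝ) (t : ℕ) :
    (a ::ₘ s).esymm (t + 1) = s.esymm (t + 1) + a * s.esymm t := by
  simp only [Multiset.esymm, Multiset.powersetCard_cons, Multiset.map_add, Multiset.sum_add,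
    Multiset.map_map, Function.comp_def, Multiset.prod_cons, Multiset.sum_map_mul_left]

theorem esymm_succ (n : ℕ) (x : Fin (n + 1) → ℝ) (m : ℤ) :
    esymm (n + 1) x m = x 0 * esymm n (Fin.tail x) (m - 1) + esymm n (Fin.tail x) m := by
  rcases lt_trichotomy m 0 with hm | rfl | hm
  · rw [esymm_of_neg _ _ hm, esymm_of_neg _ _ (by omega : m - 1 < 0), esymm_of_neg _ _ hm]
    ring
  · simp [esymm]
  · obtain ⟨t, ht⟩ : ∃ t, m.toNat = t + 1 := ⟨(m - 1).toNat, by omega⟩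
    have hval : univ.val.map x = x 0 ::ₘ univ.val.map (Fin.tail x) := by
      rw [Fin.univ_succ, cons_val, Multiset.map_cons, map_val, Multiset.map_map]
      rfl
    simp only [esymm, if_pos hm.le, if_pos (by omega : (0 : ℤ) ≤ m - 1), ht,
      show (m - 1).toNat = t by omega, ← esymm_map_val, hval, Multiset.esymm_cons_succ_s16]
    ring

theorem esymm_succ_succ_of_eq_neg (n : ℕ) (α : ℝ) (x : Fin (n + 2) → ℝ) (h0 : x 0 = -α)
    (h1 : x 1 = -α) (m : ℤ) :
    esymm (n + 2) x m = α ^ 2 * esymm n (Fin.tail (Fin.tail x)) (m - 2)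
      - 2 * α * esymm n (Fin.tail (Fin.tail x)) (m - 1) + esymm n (Fin.tail (Fin.tail x)) m := by
  have h1' : Fin.tail x 0 = -α := h1
  rw [esymm_succ, esymm_succ, esymm_succ, h0, h1', show m - 1 - 1 = m - 2 by ring]
  ring

theorem sum_range_mul_second_diff (w : ℤ → ℝ) (b : ℕ → ℝ) (N : ℕ) (h₁ : w (-1) = 0)
    (h₂ : w (-2) = 0) (hN : w N = 0) (hN₁ : w (N + 1) = 0) :
    ∑ i ∈ range N, w i * (b i - 2 * b (i + 1) + b (i + 2)) =
      ∑ i ∈ range (N + 2), (w i - 2 * w (i - 1) + w (i - 2)) * b i := by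
  have h0 : ∑ i ∈ range (N + 2), w i * b i = ∑ i ∈ range N, w i * b i := by
    simp [sum_range_succ, hN, hN₁]
  have h1 : ∑ i ∈ range (N + 2), w (i - 1) * b i = ∑ i ∈ range N, w i * b (i + 1) := by
    rw [sum_range_succ', sum_range_succ]
    simp [hN, h₁]
  have h2 : ∑ i ∈ range (N + 2), w (i - 2) * b i = ∑ i ∈ range N, w i * b (i + 2) := by
    rw [sum_range_succ', sum_range_succ']
    simp [h₁, h₂, add_assoc]
  simp only [sub_mul, add_mul, sum_add_distrib, sum_sub_distrib, mul_assoc, ← mul_sum, h0, h1, h2,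
    mul_add, mul_sub, mul_left_comm (w _)]

theorem sum_range_pow_mul_shift {K c : ℕ} (hc : c ≤ 2) {α : ℝ} {a : ℤ → ℝ}
    (ha : ∀ m, m < 0 ∨ (K : ℤ) < m → a m = 0) :
    ∑ i ∈ range (K + 3), α ^ i * a (K + c - i) =
      α ^ c * ∑ i ∈ range (K + 1), α ^ i * a (K - i) := by
  have hhead : ∑ i ∈ range c, α ^ i * a (K + c - i) = 0 :=
    sum_eq_zero fun i hi => by rw [ha _ (by simp at hi; omega), mul_zero]
  have htail :
      ∑ i ∈ range (2 - c), α ^ (c + (K + 1) + i) * a (K + c - (c + (K + 1) + i : ℕ)) = 0 :=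
    sum_eq_zero fun i _ => by rw [ha _ (by push_cast; omega), mul_zero]
  rw [show K + 3 = c + (K + 1) + (2 - c) by omega, sum_range_add, sum_range_add, hhead, htail,
    zero_add, add_zero, mul_sum]
  refine sum_congr rfl fun i _ => ?_
  rw [show (K : ℤ) + c - (c + i : ℕ) = K - i by push_cast; ring, pow_add, mul_assoc]

theorem sum_weight_mul_conv_of_second_diff_const {K c : ℕ} (hc : c ≤ 2) {α D lam : ℝ}
    {a e w q : ℤ → ℝ} (ha : ∀ m, m < 0 ∨ (K : ℤ) < m → a m = 0)
    (he : ∀ m, e m = α ^ 2 * a (m - 2) - 2 * α * a (m - 1) + a m)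
    (hw : ∀ i, i < 0 ∨ (K : ℤ) < i → w i = 0)
    (hwq : ∀ i : ℤ, (c : ℤ) - 2 ≤ i → i ≤ K + c → w i = q i / D)
    (hq : ∀ i, q i - 2 * q (i - 1) + q (i - 2) = 2 * lam) :
    ∑ i ∈ range (K + 1), w i * α ^ i * e (K + c - i) =
      2 * lam / D * α ^ c * ∑ i ∈ range (K + 1), α ^ i * a (K - i) := by
  set b : ℕ → ℝ := fun j => α ^ j * a (K + c - j) with hb
  have hterm (i : ℕ) : α ^ i * e (K + c - i) = b i - 2 * b (i + 1) + b (i + 2) := by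
    simp only [hb, he]
    push_cast
    ring_nf
  have hΔ (i : ℤ) (hi : c ≤ i) (hi' : i ≤ K + c) :
      w i - 2 * w (i - 1) + w (i - 2) = 2 * lam / D := by
    rw [hwq i (by omega) hi', hwq (i - 1) (by omega) (by omega), hwq (i - 2) (by omega) (by omega),
      ← hq i]
    ring
  calc ∑ i ∈ range (K + 1), w i * α ^ i * e (K + c - i)
      = ∑ i ∈ range (K + 1), w i * (b i - 2 * b (i + 1) + b (i + 2)) := by
        simp only [mul_assoc, hterm]
    _ = ∑ i ∈ range (K + 3), (w i - 2 * w (i - 1) + w (i - 2)) * b i :=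
        sum_range_mul_second_diff w b (K + 1) (hw _ (by omega)) (hw _ (by omega))
          (hw _ (by omega)) (hw _ (by omega))
    _ = ∑ i ∈ range (K + 3), 2 * lam / D * b i := by
        refine sum_congr rfl fun i _ => ?_
        by_cases hi : c ≤ i ∧ i ≤ K + c
        · rw [hΔ i (by omega) (by omega)]
        · simp only [hb, ha (K + c - i) (by omega), mul_zero]
    _ = 2 * lam / D * α ^ c * ∑ i ∈ range (K + 1), α ^ i * a (K - i) := by
        rw [← mul_sum, sum_range_pow_mul_shift hc ha, mul_assoc]

namespace Nat

theorem cast_add_one_mul_choose (n k : ℕ) :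
    ((n : ℝ) + 1) * n.choose k = (n + 1).choose (k + 1) * ((k : ℝ) + 1) := by
  exact_mod_cast Nat.add_one_mul_choose_eq n k

theorem cast_choose_mul_add_one {n k : ℕ} (hk : k ≤ n + 1) :
    (n.choose k : ℝ) * ((n : ℝ) + 1) = (n + 1).choose k * ((n : ℝ) + 1 - k) := by
  have h := Nat.choose_mul_succ_eq n k
  rw [← Nat.cast_inj (R := ℝ)] at h
  push_cast [Nat.cast_sub hk] at h
  linear_combination h

theorem choose_add_two_add_two_mul (K i : ℕ) :
    ((K + 2).choose (i + 2) : ℝ) * ((i + 1) * (i + 2)) = K.choose i * ((K + 1) * (K + 2)) := by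
  have h1 := cast_add_one_mul_choose (K + 1) (i + 1)
  rw [show K + 1 + 1 = K + 2 from rfl, show i + 1 + 1 = i + 2 from rfl] at h1
  push_cast at h1
  linear_combination (-(i : ℝ) - 1) * h1 - ((K : ℝ) + 2) * cast_add_one_mul_choose K i

theorem choose_add_two_add_one_mul {K i : ℕ} (hi : i ≤ K) :
    ((K + 2).choose (i + 1) : ℝ) * ((i + 1) * (K + 1 - i)) = K.choose i * ((K + 1) * (K + 2)) := by
  have h1 := cast_add_one_mul_choose (K + 1) i
  rw [show K + 1 + 1 = K + 2 from rfl] at h1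
  push_cast at h1
  linear_combination (-(K : ℝ) - 1 + i) * h1 -
    ((K : ℝ) + 2) * cast_choose_mul_add_one (n := K) (k := i) (by omega)

theorem choose_add_two_mul {K i : ℕ} (hi : i ≤ K) :
    ((K + 2).choose i : ℝ) * ((K + 1 - i) * (K + 2 - i)) = K.choose i * ((K + 1) * (K + 2)) := by
  have h1 := cast_choose_mul_add_one (n := K + 1) (k := i) (by omega)
  rw [show K + 1 + 1 = K + 2 from rfl] at h1
  push_cast at h1
  linear_combination (-(K : ℝ) - 1 + i) * h1 -
    ((K : ℝ) + 2) * cast_choose_mul_add_one (n := K) (k := i) (by omega)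

end Nat

/-- The coefficient `C(s,i) / C(n,m-i)` of `α^i σ_{m-i}` in `S_{m;s}` for `s = K`, `n = K + 2`,
`m = K + c`, extended by zero to negative `i`. -/
noncomputable def binomWeight (K c : ℕ) (i : ℤ) : ℝ :=
  if 0 ≤ i then (K.choose i.toNat : ℝ) / (K + 2).choose ((K + c : ℤ) - i).toNat else 0

theorem binomWeight_of_lt {K c : ℕ} {i : ℤ} (hi : i < 0 ∨ (K : ℤ) < i) :
    binomWeight K c i = 0 := by
  unfold binomWeight
  split_ifs
  · rw [Nat.choose_eq_zero_of_lt (by omega), Nat.cast_zero, zero_div]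
  · rfl

theorem binomWeight_natCast {K c i : ℕ} (hi : i ≤ K) :
    binomWeight K c i = (K.choose i : ℝ) / (K + 2).choose (K + c - i) := by
  rw [binomWeight, if_pos (by omega), Int.toNat_natCast,
    show ((K + c : ℤ) - i).toNat = K + c - i by omega]

theorem Ss_eq_sum_binomWeight (K c : ℕ) (α : ℝ) (x : Fin (K + 2) → ℝ) :
    Ss (K + 2) α x K (K + c) =
      ∑ i ∈ range (K + 1), binomWeight K c i * α ^ i * esymm (K + 2) x (K + c - i) := by
  refine sum_congr rfl fun i _ => ?_
  rw [Esymm, binomWeight, if_pos (by omega), Int.toNat_natCast]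
  ring

theorem Ss_eq_of_binomWeight_eq {K c : ℕ} (hc : c ≤ 2) {α lam : ℝ} {q : ℤ → ℝ}
    {x : Fin (K + 2) → ℝ} (h0 : x 0 = -α) (h1 : x 1 = -α)
    (hq : ∀ i, q i - 2 * q (i - 1) + q (i - 2) = 2 * lam)
    (hin : ∀ i : ℕ, i ≤ K → binomWeight K c i * ((K + 1) * (K + 2)) = q i)
    -- the second differences taken on `[c, K + c]` also see the points of `[c - 2, K + c]`
    -- outside `[0, K]`, where `binomWeight` vanishes
    (hout : ∀ i : ℤ, (c : ℤ) - 2 ≤ i → i ≤ K + c → i < 0 ∨ (K : ℤ) < i → q i = 0) :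
    Ss (K + 2) α x K (K + c) = 2 * lam / ((K + 1) * (K + 2)) * α ^ c *
      ∑ i ∈ range (K + 1), α ^ i * esymm K (Fin.tail (Fin.tail x)) (K - i) := by
  rw [Ss_eq_sum_binomWeight]
  refine sum_weight_mul_conv_of_second_diff_const hc (fun m hm => ?_)
    (esymm_succ_succ_of_eq_neg K α x h0 h1) (fun i hi => binomWeight_of_lt hi)
    (fun i hi hi' => ?_) hq
  · rcases hm with hm | hm
    exacts [esymm_of_neg _ _ hm, esymm_of_lt _ _ hm]
  · rw [eq_div_iff (by positivity)]
    by_cases h : i < 0 ∨ (K : ℤ) < i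
    · rw [binomWeight_of_lt h, hout i hi hi' h, zero_mul]
    · lift i to ℕ using by omega
      exact hin i (by omega)

theorem Ss_add_zero_of_eq_neg {K : ℕ} {α : ℝ} {x : Fin (K + 2) → ℝ} (h0 : x 0 = -α)
    (h1 : x 1 = -α) :
    Ss (K + 2) α x K K = 2 / ((K + 1) * (K + 2)) *
      ∑ i ∈ range (K + 1), α ^ i * esymm K (Fin.tail (Fin.tail x)) (K - i) := by
  have h := Ss_eq_of_binomWeight_eq (c := 0) (lam := 1)
    (q := fun i : ℤ => ((i : ℝ) + 1) * ((i : ℝ) + 2))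
    (by omega) h0 h1 (fun i => by push_cast; ring) (fun i hi => ?_) (fun i hi hi' h => ?_)
  · simpa using h
  · rw [binomWeight_natCast hi,
      Nat.choose_symm_of_eq_add (show K + 2 = K + 0 - i + (i + 2) by omega), div_mul_eq_mul_div,
      div_eq_iff (Nat.cast_ne_zero.2 (Nat.choose_pos (by omega)).ne'),
      ← Nat.choose_add_two_add_two_mul]
    push_cast
    ring
  · obtain rfl | rfl : i = -2 ∨ i = -1 := by omega
    all_goals norm_num

theorem Ss_add_one_of_eq_neg {K : ℕ} {α : ℝ} {x : Fin (K + 2) → ℝ} (h0 : x 0 = -α)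
    (h1 : x 1 = -α) :
    Ss (K + 2) α x K (K + 1) = -2 * α / ((K + 1) * (K + 2)) *
      ∑ i ∈ range (K + 1), α ^ i * esymm K (Fin.tail (Fin.tail x)) (K - i) := by
  have h := Ss_eq_of_binomWeight_eq (c := 1) (lam := -1)
    (q := fun i : ℤ => ((i : ℝ) + 1) * ((K : ℝ) + 1 - i))
    (by omega) h0 h1 (fun i => by push_cast; ring) (fun i hi => ?_) (fun i hi hi' h => ?_)
  · push_cast at h
    rw [h]
    ring
  · rw [binomWeight_natCast hi,
      Nat.choose_symm_of_eq_add (show K + 2 = K + 1 - i + (i + 1) by omega), div_mul_eq_mul_div,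
      div_eq_iff (Nat.cast_ne_zero.2 (Nat.choose_pos (by omega)).ne'),
      ← Nat.choose_add_two_add_one_mul hi]
    push_cast
    ring
  · obtain rfl | rfl : i = -1 ∨ i = K + 1 := by omega
    all_goals push_cast; ring

theorem Ss_add_two_of_eq_neg {K : ℕ} {α : ℝ} {x : Fin (K + 2) → ℝ} (h0 : x 0 = -α)
    (h1 : x 1 = -α) :
    Ss (K + 2) α x K (K + 2) = 2 * α ^ 2 / ((K + 1) * (K + 2)) *
      ∑ i ∈ range (K + 1), α ^ i * esymm K (Fin.tail (Fin.tail x)) (K - i) := by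
  have h := Ss_eq_of_binomWeight_eq (c := 2) (lam := 1)
    (q := fun i : ℤ => ((K : ℝ) + 1 - i) * ((K : ℝ) + 2 - i))
    (by omega) h0 h1 (fun i => by push_cast; ring) (fun i hi => ?_) (fun i hi hi' h => ?_)
  · push_cast at h
    rw [h]
    ring
  · rw [binomWeight_natCast hi, Nat.choose_symm (by omega), div_mul_eq_mul_div,
      div_eq_iff (Nat.cast_ne_zero.2 (Nat.choose_pos (by omega)).ne'), ← Nat.choose_add_two_mul hi]
    push_cast
    ring
  · obtain rfl | rfl : i = K + 1 ∨ i = K + 2 := by omega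
    all_goals push_cast; ring

theorem Ss_equality_case (k : ℕ) (hk : 1 ≤ k) (α : ℝ) (z : Fin (k + 1) → ℝ)
    (h1 : z 0 = -α) (h2 : z 1 = -α) (P : ℝ)
    (hP : P = ∑ i ∈ Finset.range k,
      α ^ i * esymm (k - 1) (fun j : Fin (k - 1) => z ⟨j.1 + 2, by have := j.2; omega⟩)
        ((k - 1 - i : ℕ) : ℤ)) :
    Ss (k + 1) α z (k - 1) k = (-2 * α / ((k : ℝ) * ((k : ℝ) + 1))) * P ∧
    Ss (k + 1) α z (k - 1) ((k : ℤ) - 1) = (2 / ((k : ℝ) * ((k : ℝ) + 1))) * P ∧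
    Ss (k + 1) α z (k - 1) ((k : ℤ) + 1) = (2 * α ^ 2 / ((k : ℝ) * ((k : ℝ) + 1))) * P ∧
    (P ≠ 0 →
      Ss (k + 1) α z (k - 1) k / Ss (k + 1) α z (k - 1) ((k : ℤ) - 1) = -α ∧
      Ss (k + 1) α z (k - 1) ((k : ℤ) + 1) / Ss (k + 1) α z (k - 1) k = -α) := by
  obtain ⟨K, rfl⟩ : ∃ K, k = K + 1 := ⟨k - 1, by omega⟩
  have hPK : P = ∑ i ∈ range (K + 1), α ^ i * esymm K (Fin.tail (Fin.tail z)) (K - i) := by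
    rw [hP]
    refine sum_congr rfl fun i hi => ?_
    rw [show ((K + 1 - 1 - i : ℕ) : ℤ) = K - i by simp at hi; omega]
    rfl
  have hS₀ := Ss_add_zero_of_eq_neg h1 h2
  have hS₁ := Ss_add_one_of_eq_neg h1 h2
  have hS₂ := Ss_add_two_of_eq_neg h1 h2
  rw [← hPK] at hS₀ hS₁ hS₂
  simp only [Nat.add_sub_cancel, Nat.cast_add, Nat.cast_one, add_sub_cancel_right, add_assoc,
    one_add_one_eq_two]
  refine ⟨hS₁, hS₀, hS₂, fun hP0 => ⟨?_, ?_⟩⟩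
  · rw [hS₁, hS₀]
    field_simp
  · rw [hS₂, hS₁]
    rcases eq_or_ne α 0 with rfl | hα
    · simp
    · field_simp
end
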